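/- arXiv:1512.02424 — 4 statements merged into one kernel-verified Lean document; each statement's English description precedes it below -/
import Mathlib

section
/- Let μ > 0. Let V, w : ℝ × [−1, 0] → ℝ be continuously differentiable on the closed strip S = ℝ × (−1, 0), with (V, w) square integrable on S, satisfying √μ ∂ₓ V + ∂_z w = 0 and ∂_z V − √μ ∂ₓ w = 0 on S, together with the boundary conditions w(x, −1) = 0 and w(x, 0) = 0 for all x ∈ ℝ. Then V = 0 and w = 0 identically on S. -/
/-!
With `s = √μ`, the stream function `ψ(x, z) = s ∫_{-1}^z V(x, t) dt` satisfies `∂_z ψ = s V`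
and, by the divergence equation and `w(x, -1) = 0`, `∂ₓ ψ = -w`. Hence `ψ(x, 0)` is constant
in `x`, and since `ψ(x, 0)² ≤ μ ∫ (V² + w²)(x, ·)` is integrable over `ℝ`, `ψ` vanishes on
both boundary lines. Differentiating the flux `F(x) = ∫ ψ w dz` and integrating by parts in `z`
with the curl equation gives `F' = -∫ (V² + w²) dz ≤ 0`. An antitone integrable function on
`ℝ` vanishes, so `F' = 0`: every vertical slice carries zero energy.
-/
open MeasureTheory Set Filter Topology Metric
open scoped Interval

theorem Antitone.eq_zero_of_integrable {f : ℝ → ℝ} (hf : Antitone f) (hi : Integrable f) :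
    f = 0 := by
  funext x₀
  by_contra hne
  have hpos : 0 < |f x₀| := abs_pos.2 hne
  have hfin := hi.measure_norm_ge_lt_top hpos
  refine absurd hfin (not_lt.2 ?_)
  rcases lt_or_gt_of_ne hne with hneg | hpos'
  · refine Real.volume_Ici (a := x₀) ▸ measure_mono fun x hx => ?_
    have := hf (mem_Ici.1 hx)
    simp only [mem_ofPred_eq, Real.norm_eq_abs]
    rw [abs_of_neg hneg]
    exact (neg_le_neg this).trans (neg_le_abs _)
  · refine Real.volume_Iic (a := x₀) ▸ measure_mono fun x hx => ?_
    have := hf (mem_Iic.1 hx)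
    simp only [mem_ofPred_eq, Real.norm_eq_abs]
    rw [abs_of_pos hpos']
    exact this.trans (le_abs_self _)

theorem sq_intervalIntegral_le {f : ℝ → ℝ} {a b : ℝ} (hab : a ≤ b)
    (hf : ContinuousOn f (Icc a b)) :
    (∫ t in a..b, f t) ^ 2 ≤ (b - a) * ∫ t in a..b, f t ^ 2 := by
  have hfi : IntervalIntegrable f volume a b := hf.intervalIntegrable_of_Icc hab
  have hf2 : IntervalIntegrable (fun t => f t ^ 2) volume a b :=
    (hf.pow 2).intervalIntegrable_of_Icc hab
  have hquad : ∀ c : ℝ, 0 ≤ (b - a) * (c * c) + (-2 * ∫ t in a..b, f t) * c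
      + ∫ t in a..b, f t ^ 2 := by
    intro c
    have hexp : ∫ t in a..b, (c - f t) ^ 2
        = (b - a) * (c * c) + (-2 * ∫ t in a..b, f t) * c + ∫ t in a..b, f t ^ 2 := by
      have : (fun t => (c - f t) ^ 2) = fun t => (c * c - 2 * c * f t) + f t ^ 2 := by
        funext t; ring
      rw [this, intervalIntegral.integral_add ((intervalIntegrable_const).sub
        (hfi.const_mul _)) hf2, intervalIntegral.integral_sub intervalIntegrable_const
        (hfi.const_mul _), intervalIntegral.integral_const, intervalIntegral.integral_const_mul,
        smul_eq_mul]
      ring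
    exact hexp ▸ intervalIntegral.integral_nonneg hab fun t _ => sq_nonneg _
  have := discrim_le_zero hquad
  rw [discrim] at this
  nlinarith

theorem eqOn_zero_of_intervalIntegral_eq_zero {f : ℝ → ℝ} {a b : ℝ} (hab : a ≤ b)
    (hf : ContinuousOn f (Icc a b)) (hnonneg : ∀ t ∈ Icc a b, 0 ≤ f t)
    (h0 : ∫ t in a..b, f t = 0) : EqOn f 0 (Ioo a b) := by
  rw [intervalIntegral.integral_eq_zero_iff_of_nonneg_ae
    ((ae_restrict_iff' (measurableSet_Ioc.union measurableSet_Ioc)).2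
      (ae_of_all _ fun t ht => ?_)) (hf.intervalIntegrable_of_Icc hab)] at h0
  · refine Measure.eqOn_open_of_ae_eq (ae_restrict_of_ae_restrict_of_subset ?_ h0) isOpen_Ioo
      (hf.mono Ioo_subset_Icc_self) continuousOn_const
    exact Ioo_subset_Ioc_self.trans subset_union_left
  · rcases ht with ht | ht
    · exact hnonneg t (Ioc_subset_Icc_self ht)
    · exact absurd (ht.1.trans_le ht.2) hab.not_gt

theorem ContinuousOn.slice {f : ℝ × ℝ → ℝ} {t : Set ℝ} (hf : ContinuousOn f (univ ×ˢ t))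
    (x : ℝ) : ContinuousOn (fun z => f (x, z)) t :=
  hf.comp (Continuous.prodMk_right x).continuousOn fun _ hz => ⟨trivial, hz⟩

theorem continuousOn_parametric_primitive {f : ℝ × ℝ → ℝ} {a b : ℝ} (hab : a ≤ b)
    (hf : ContinuousOn f (univ ×ˢ Icc a b)) :
    ContinuousOn (fun p : ℝ × ℝ => ∫ t in a..p.2, f (p.1, t)) (univ ×ˢ Icc a b) := by
  -- clamping the second coordinate to `[a, b]` extends `f` continuously to the whole plane
  set g : ℝ × ℝ → ℝ := fun p => f (p.1, projIcc a b hab p.2)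
  have hg : Continuous g := hf.comp_continuous
    (continuous_fst.prodMk (continuous_subtype_val.comp (continuous_projIcc.comp continuous_snd)))
    fun p => ⟨trivial, Subtype.mem _⟩
  refine (intervalIntegral.continuous_parametric_primitive_of_continuous
    (f := fun x t => g (x, t)) (μ := volume) (a₀ := a) hg).continuousOn.congr fun p hp => ?_
  refine intervalIntegral.integral_congr fun t ht => ?_
  rw [uIcc_of_le hp.2.1] at ht
  simp only [g, projIcc_of_mem hab ⟨ht.1, ht.2.trans hp.2.2⟩]

theorem hasDerivAt_intervalIntegral_of_continuousOn {F F' : ℝ × ℝ → ℝ} {a b : ℝ}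
    (hab : a ≤ b) (hF : ContinuousOn F (univ ×ˢ Icc a b))
    (hF' : ContinuousOn F' (univ ×ˢ Icc a b))
    (hderiv : ∀ x, ∀ z ∈ Ioo a b, HasDerivAt (fun x => F (x, z)) (F' (x, z)) x) (x₀ : ℝ) :
    HasDerivAt (fun x => ∫ z in a..b, F (x, z)) (∫ z in a..b, F' (x₀, z)) x₀ := by
  obtain ⟨C, hC⟩ := (isCompact_closedBall x₀ 1 |>.prod isCompact_Icc).exists_bound_of_continuousOn
    (hF'.mono (prod_mono (subset_univ _) subset_rfl))
  have hIoc : Ι a b ⊆ Icc a b := by rw [uIoc_of_le hab]; exact Ioc_subset_Icc_self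
  have hIoo : ∀ᵐ t : ℝ, t ∈ Ι a b → t ∈ Ioo a b := by
    filter_upwards [Measure.ae_ne volume b] with t htb ht
    rw [uIoc_of_le hab] at ht
    exact ⟨ht.1, ht.2.lt_of_ne htb⟩
  refine (intervalIntegral.hasDerivAt_integral_of_dominated_loc_of_deriv_le
    (F := fun x z => F (x, z)) (F' := fun x z => F' (x, z)) (bound := fun _ => C)
    (ball_mem_nhds x₀ one_pos)
    (Eventually.of_forall fun x => ((hF.slice x).mono hIoc).aestronglyMeasurable measurableSet_uIoc)
    ((hF.slice x₀).intervalIntegrable_of_Icc hab)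
    (((hF'.slice x₀).mono hIoc).aestronglyMeasurable measurableSet_uIoc)
    (ae_of_all _ fun t ht x hx => hC (x, t) ⟨ball_subset_closedBall hx, hIoc ht⟩)
    intervalIntegrable_const ?_).2
  filter_upwards [hIoo] with t ht hmem x _
  exact hderiv x t (ht hmem)

theorem integrable_intervalIntegral_of_integrableOn_prod {f : ℝ × ℝ → ℝ} {a b : ℝ}
    (hab : a ≤ b) (hf : IntegrableOn f (univ ×ˢ Ioo a b)) :
    Integrable fun x => ∫ z in a..b, f (x, z) := by
  rw [IntegrableOn, Measure.volume_eq_prod, ← Measure.prod_restrict, Measure.restrict_univ] at hf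
  refine hf.integral_prod_left.congr (ae_of_all _ fun x => ?_)
  simp only [intervalIntegral.integral_of_le hab, integral_Ioc_eq_integral_Ioo]

/-- The scaled div-curl system `s ∂ₓV + ∂_z w = 0`, `∂_z V - s ∂ₓw = 0` on the strip
`ℝ × [-1, 0]` (`s = √μ`), with the horizontal derivatives eliminated through the equations:
`∂ₓV = -Wz / s` and `∂ₓw = Vz / s`, where `Vz`, `Wz` stand for `∂_z V`, `∂_z w`. -/
structure IsDivCurlFreeOnStrip (s : ℝ) (V w Vz Wz : ℝ × ℝ → ℝ) : Prop where
  continuousOn_V : ContinuousOn V (univ ×ˢ Icc (-1) 0)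
  continuousOn_w : ContinuousOn w (univ ×ˢ Icc (-1) 0)
  continuousOn_Vz : ContinuousOn Vz (univ ×ˢ Icc (-1) 0)
  continuousOn_Wz : ContinuousOn Wz (univ ×ˢ Icc (-1) 0)
  hasDerivAt_V_fst : ∀ x, ∀ z ∈ Ioo (-1 : ℝ) 0,
    HasDerivAt (fun x => V (x, z)) (-Wz (x, z) / s) x
  hasDerivAt_V_snd : ∀ x, ∀ z ∈ Ioo (-1 : ℝ) 0, HasDerivAt (fun z => V (x, z)) (Vz (x, z)) z
  hasDerivAt_w_fst : ∀ x, ∀ z ∈ Ioo (-1 : ℝ) 0, HasDerivAt (fun x => w (x, z)) (Vz (x, z) / s) x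
  hasDerivAt_w_snd : ∀ x, ∀ z ∈ Ioo (-1 : ℝ) 0, HasDerivAt (fun z => w (x, z)) (Wz (x, z)) z

noncomputable def streamFunction (s : ℝ) (V : ℝ × ℝ → ℝ) (p : ℝ × ℝ) : ℝ :=
  s * ∫ t in (-1)..p.2, V (p.1, t)

noncomputable def sliceEnergy (V w : ℝ × ℝ → ℝ) (x : ℝ) : ℝ :=
  ∫ z in (-1)..0, V (x, z) ^ 2 + w (x, z) ^ 2

noncomputable def streamFlux (s : ℝ) (V w : ℝ × ℝ → ℝ) (x : ℝ) : ℝ :=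
  ∫ z in (-1)..0, streamFunction s V (x, z) * w (x, z)

section Strip

variable {s : ℝ} {V w Vz Wz : ℝ × ℝ → ℝ}

theorem sliceEnergy_nonneg (V w : ℝ × ℝ → ℝ) (x : ℝ) : 0 ≤ sliceEnergy V w x :=
  intervalIntegral.integral_nonneg (by norm_num) fun _ _ => by positivity

theorem integrable_sliceEnergy
    (hL2 : IntegrableOn (fun p => V p ^ 2 + w p ^ 2) (univ ×ˢ Ioo (-1) 0)) :
    Integrable (sliceEnergy V w) :=
  integrable_intervalIntegral_of_integrableOn_prod (by norm_num) hL2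

theorem continuousOn_streamFunction (hV : ContinuousOn V (univ ×ˢ Icc (-1) 0)) :
    ContinuousOn (streamFunction s V) (univ ×ˢ Icc (-1) 0) :=
  continuousOn_const.mul (continuousOn_parametric_primitive (by norm_num) hV)

theorem streamFunction_bottom (x : ℝ) : streamFunction s V (x, -1) = 0 := by
  simp [streamFunction]

theorem hasDerivAt_streamFunction_snd (hV : ContinuousOn V (univ ×ˢ Icc (-1) 0)) {x z : ℝ}
    (hz : z ∈ Ioo (-1 : ℝ) 0) :
    HasDerivAt (fun z => streamFunction s V (x, z)) (s * V (x, z)) z := by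
  have hVx := hV.slice x
  refine (intervalIntegral.integral_hasDerivAt_right
    ((hVx.mono (Icc_subset_Icc_right hz.2.le)).intervalIntegrable_of_Icc hz.1.le)
    ((hVx.mono Ioo_subset_Icc_self).stronglyMeasurableAtFilter isOpen_Ioo z hz)
    ((hVx z (Ioo_subset_Icc_self hz)).continuousAt (Icc_mem_nhds hz.1 hz.2))).const_mul s

theorem sq_streamFunction_le (hV : ContinuousOn V (univ ×ˢ Icc (-1) 0))
    (hw : ContinuousOn w (univ ×ˢ Icc (-1) 0)) {x z : ℝ} (hz : z ∈ Icc (-1 : ℝ) 0) :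
    streamFunction s V (x, z) ^ 2 ≤ s ^ 2 * sliceEnergy V w x := by
  have hcont : ContinuousOn (fun t => V (x, t) ^ 2 + w (x, t) ^ 2) (Icc (-1) 0) :=
    ((hV.slice x).pow 2).add ((hw.slice x).pow 2)
  calc streamFunction s V (x, z) ^ 2 = s ^ 2 * (∫ t in (-1)..z, V (x, t)) ^ 2 := by
        rw [streamFunction, mul_pow]
    _ ≤ s ^ 2 * ((z - -1) * ∫ t in (-1)..z, V (x, t) ^ 2) := by
        gcongr
        exact sq_intervalIntegral_le hz.1 ((hV.slice x).mono (Icc_subset_Icc_right hz.2))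
    _ ≤ s ^ 2 * sliceEnergy V w x := by
        gcongr
        calc (z - -1) * ∫ t in (-1)..z, V (x, t) ^ 2 ≤ ∫ t in (-1)..z, V (x, t) ^ 2 :=
              mul_le_of_le_one_left (intervalIntegral.integral_nonneg hz.1 fun _ _ => sq_nonneg _)
                (by linarith [hz.2])
          _ ≤ ∫ t in (-1)..z, V (x, t) ^ 2 + w (x, t) ^ 2 :=
              intervalIntegral.integral_mono_on hz.1
                ((((hV.slice x).pow 2).mono (Icc_subset_Icc_right hz.2)).intervalIntegrable_of_Icc
                  hz.1)
                ((hcont.mono (Icc_subset_Icc_right hz.2)).intervalIntegrable_of_Icc hz.1)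
                fun t _ => le_add_of_nonneg_right (sq_nonneg _)
          _ ≤ sliceEnergy V w x :=
              intervalIntegral.integral_mono_interval le_rfl hz.1 hz.2
                (ae_of_all _ fun _ => by positivity) (hcont.intervalIntegrable_of_Icc (by norm_num))

theorem abs_streamFlux_le (hV : ContinuousOn V (univ ×ˢ Icc (-1) 0))
    (hw : ContinuousOn w (univ ×ˢ Icc (-1) 0)) (x : ℝ) :
    |streamFlux s V w x| ≤ (s ^ 2 + 1) * sliceEnergy V w x := by
  have hψw : ContinuousOn (fun z => streamFunction s V (x, z) * w (x, z)) (Icc (-1) 0) :=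
    ((continuousOn_streamFunction hV).mul hw).slice x
  have hVw : ContinuousOn (fun z => V (x, z) ^ 2 + w (x, z) ^ 2) (Icc (-1) 0) :=
    ((hV.pow 2).add (hw.pow 2)).slice x
  calc |streamFlux s V w x| ≤ ∫ z in (-1)..0, |streamFunction s V (x, z) * w (x, z)| :=
        intervalIntegral.abs_integral_le_integral_abs (by norm_num)
    _ ≤ ∫ z in (-1)..0, s ^ 2 * sliceEnergy V w x + (V (x, z) ^ 2 + w (x, z) ^ 2) := by
        refine intervalIntegral.integral_mono_on (by norm_num)
          (hψw.abs.intervalIntegrable_of_Icc (by norm_num))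
          (intervalIntegrable_const.add (hVw.intervalIntegrable_of_Icc (by norm_num)))
          fun z hz => ?_
        have hψ := sq_streamFunction_le (s := s) hV hw hz (x := x)
        have hprod : |streamFunction s V (x, z) * w (x, z)|
            ≤ streamFunction s V (x, z) ^ 2 + w (x, z) ^ 2 := by
          rw [abs_le]
          constructor <;> nlinarith [sq_nonneg (streamFunction s V (x, z) + w (x, z)),
            sq_nonneg (streamFunction s V (x, z) - w (x, z))]
        nlinarith [sq_nonneg (V (x, z))]
    _ = (s ^ 2 + 1) * sliceEnergy V w x := by
        rw [intervalIntegral.integral_add intervalIntegrable_const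
          (hVw.intervalIntegrable_of_Icc (by norm_num)), intervalIntegral.integral_const]
        simp only [sliceEnergy, smul_eq_mul]
        ring

namespace IsDivCurlFreeOnStrip

theorem hasDerivAt_streamFunction_fst (h : IsDivCurlFreeOnStrip s V w Vz Wz) (hs : s ≠ 0)
    (hbot : ∀ x, w (x, -1) = 0) {x z : ℝ} (hz : z ∈ Icc (-1 : ℝ) 0) :
    HasDerivAt (fun x => streamFunction s V (x, z)) (-w (x, z)) x := by
  have hsub : (univ : Set ℝ) ×ˢ Icc (-1) z ⊆ univ ×ˢ Icc (-1 : ℝ) 0 :=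
    prod_mono subset_rfl (Icc_subset_Icc_right hz.2)
  have hderiv := hasDerivAt_intervalIntegral_of_continuousOn hz.1 (h.continuousOn_V.mono hsub)
    ((h.continuousOn_Wz.neg.div_const s).mono hsub)
    (fun x t ht => h.hasDerivAt_V_fst x t ⟨ht.1, ht.2.trans_le hz.2⟩) x
  have hWz : ∫ t in (-1)..z, Wz (x, t) = w (x, z) :=
    calc ∫ t in (-1)..z, Wz (x, t) = w (x, z) - w (x, -1) :=
          intervalIntegral.integral_eq_sub_of_hasDerivAt_of_le hz.1
            ((h.continuousOn_w.slice x).mono (Icc_subset_Icc_right hz.2))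
            (fun t ht => h.hasDerivAt_w_snd x t ⟨ht.1, ht.2.trans_le hz.2⟩)
            ((h.continuousOn_Wz.slice x).mono (Icc_subset_Icc_right hz.2)
              |>.intervalIntegrable_of_Icc hz.1)
      _ = w (x, z) := by rw [hbot, sub_zero]
  refine (hderiv.const_mul s).congr_deriv ?_
  simp only [Pi.neg_apply, intervalIntegral.integral_div, intervalIntegral.integral_neg, hWz]
  field_simp

theorem streamFunction_top (h : IsDivCurlFreeOnStrip s V w Vz Wz) (hs : s ≠ 0)
    (hbot : ∀ x, w (x, -1) = 0) (htop : ∀ x, w (x, 0) = 0)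
    (hE : Integrable (sliceEnergy V w)) (x : ℝ) : streamFunction s V (x, 0) = 0 := by
  have htop_mem : (0 : ℝ) ∈ Icc (-1 : ℝ) 0 := ⟨by norm_num, le_rfl⟩
  have hconst : ∀ y, streamFunction s V (y, 0) = streamFunction s V (x, 0) :=
    fun y => is_const_of_deriv_eq_zero
      (fun y => (h.hasDerivAt_streamFunction_fst hs hbot htop_mem (x := y)).differentiableAt)
      (fun y => by rw [(h.hasDerivAt_streamFunction_fst hs hbot htop_mem).deriv, htop, neg_zero])
      y x
  have hsq : Integrable fun _ : ℝ => streamFunction s V (x, 0) ^ 2 :=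
    (hE.const_mul (s ^ 2)).mono' aestronglyMeasurable_const (ae_of_all _ fun y => by
      rw [Real.norm_eq_abs, abs_of_nonneg (sq_nonneg _), ← hconst y]
      exact sq_streamFunction_le h.continuousOn_V h.continuousOn_w htop_mem)
  exact pow_eq_zero_iff two_ne_zero |>.1 (congrFun (antitone_const.eq_zero_of_integrable hsq) x)

theorem integral_streamFunction_mul_Vz (h : IsDivCurlFreeOnStrip s V w Vz Wz) {x : ℝ}
    (htop : streamFunction s V (x, 0) = 0) :
    ∫ z in (-1)..0, streamFunction s V (x, z) * Vz (x, z)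
      = -(s * ∫ z in (-1)..0, V (x, z) ^ 2) := by
  have hIcc : [[(-1 : ℝ), 0]] = Icc (-1) 0 := uIcc_of_le (by norm_num)
  have hIoo : ∀ z ∈ Ioo (min (-1 : ℝ) 0) (max (-1) 0), z ∈ Ioo (-1 : ℝ) 0 := by
    simp
  rw [intervalIntegral.integral_mul_deriv_eq_deriv_mul_of_hasDerivAt (u' := fun z => s * V (x, z))
      (hIcc ▸ (continuousOn_streamFunction h.continuousOn_V).slice x)
      (hIcc ▸ h.continuousOn_V.slice x)
      (fun z hz => hasDerivAt_streamFunction_snd h.continuousOn_V (hIoo z hz))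
      (fun z hz => h.hasDerivAt_V_snd x z (hIoo z hz))
      (((h.continuousOn_V.slice x).const_smul s).intervalIntegrable_of_Icc (by norm_num))
      ((h.continuousOn_Vz.slice x).intervalIntegrable_of_Icc (by norm_num)),
    htop, streamFunction_bottom, ← intervalIntegral.integral_const_mul]
  simp only [zero_mul, sub_self, zero_sub, mul_assoc, sq]

theorem hasDerivAt_streamFlux (h : IsDivCurlFreeOnStrip s V w Vz Wz) (hs : s ≠ 0)
    (hbot : ∀ x, w (x, -1) = 0) (htop : ∀ x, w (x, 0) = 0)
    (hE : Integrable (sliceEnergy V w)) (x : ℝ) :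
    HasDerivAt (streamFlux s V w) (-sliceEnergy V w x) x := by
  have hψ := continuousOn_streamFunction (s := s) h.continuousOn_V
  have hderiv := hasDerivAt_intervalIntegral_of_continuousOn (by norm_num) (hψ.mul h.continuousOn_w)
    ((h.continuousOn_w.neg.mul h.continuousOn_w).add (hψ.mul (h.continuousOn_Vz.div_const s)))
    (fun x z hz => (h.hasDerivAt_streamFunction_fst hs hbot (Ioo_subset_Icc_self hz)).mul
      (h.hasDerivAt_w_fst x z hz)) x
  refine hderiv.congr_deriv ?_
  have hIBP := h.integral_streamFunction_mul_Vz (h.streamFunction_top hs hbot htop hE x)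
  have hsliceInt : ∀ {f : ℝ × ℝ → ℝ}, ContinuousOn f (univ ×ˢ Icc (-1) 0) →
      IntervalIntegrable (fun z => f (x, z)) volume (-1) 0 :=
    fun hf => (hf.slice x).intervalIntegrable_of_Icc (by norm_num)
  have hV2 : IntervalIntegrable (fun z => V (x, z) ^ 2) volume (-1) 0 :=
    hsliceInt (h.continuousOn_V.pow 2)
  have hw2 : IntervalIntegrable (fun z => w (x, z) ^ 2) volume (-1) 0 :=
    hsliceInt (h.continuousOn_w.pow 2)
  have hψVz : IntervalIntegrable (fun z => streamFunction s V (x, z) * Vz (x, z)) volume (-1) 0 :=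
    hsliceInt (hψ.mul h.continuousOn_Vz)
  calc ∫ z in (-1)..0, (-w * w + streamFunction s V * fun p => Vz p / s) (x, z)
      = ∫ z in (-1)..0, -w (x, z) ^ 2 + streamFunction s V (x, z) * Vz (x, z) / s := by
        congr 1; funext z
        simp only [Pi.add_apply, Pi.mul_apply, Pi.neg_apply]
        ring
    _ = -sliceEnergy V w x := by
        rw [intervalIntegral.integral_add (f := fun z => -w (x, z) ^ 2) hw2.neg (hψVz.div_const s),
          intervalIntegral.integral_neg, intervalIntegral.integral_div, hIBP, sliceEnergy,
          intervalIntegral.integral_add hV2 hw2]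
        field_simp
        ring

theorem integrable_streamFlux (h : IsDivCurlFreeOnStrip s V w Vz Wz) (hs : s ≠ 0)
    (hbot : ∀ x, w (x, -1) = 0) (htop : ∀ x, w (x, 0) = 0)
    (hE : Integrable (sliceEnergy V w)) : Integrable (streamFlux s V w) :=
  (hE.const_mul (s ^ 2 + 1)).mono'
    (continuous_iff_continuousAt.2 fun x =>
      (h.hasDerivAt_streamFlux hs hbot htop hE x).continuousAt).aestronglyMeasurable
    (ae_of_all _ fun x => (Real.norm_eq_abs _).symm ▸
      abs_streamFlux_le h.continuousOn_V h.continuousOn_w x)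

theorem eq_zero (h : IsDivCurlFreeOnStrip s V w Vz Wz) (hs : s ≠ 0)
    (hbot : ∀ x, w (x, -1) = 0) (htop : ∀ x, w (x, 0) = 0)
    (hL2 : IntegrableOn (fun p => V p ^ 2 + w p ^ 2) (univ ×ˢ Ioo (-1) 0))
    {x z : ℝ} (hz : z ∈ Ioo (-1 : ℝ) 0) : V (x, z) = 0 ∧ w (x, z) = 0 := by
  have hE := integrable_sliceEnergy hL2
  have hflux := h.hasDerivAt_streamFlux hs hbot htop hE
  have hanti : Antitone (streamFlux s V w) :=
    antitone_of_deriv_nonpos (fun x => (hflux x).differentiableAt)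
      fun x => (hflux x).deriv ▸ neg_nonpos.2 (sliceEnergy_nonneg V w x)
  have hflux0 := hanti.eq_zero_of_integrable (h.integrable_streamFlux hs hbot htop hE)
  have hE0 : sliceEnergy V w x = 0 :=
    neg_eq_zero.1 <| (hflux x).unique (hflux0 ▸ hasDerivAt_const x 0)
  have hcont : ContinuousOn (fun z => V (x, z) ^ 2 + w (x, z) ^ 2) (Icc (-1) 0) :=
    ((h.continuousOn_V.pow 2).add (h.continuousOn_w.pow 2)).slice x
  have hVw : V (x, z) ^ 2 + w (x, z) ^ 2 = 0 :=
    eqOn_zero_of_intervalIntegral_eq_zero (by norm_num) hcont (fun _ _ => by positivity) hE0 hz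
  constructor <;> nlinarith [sq_nonneg (V (x, z)), sq_nonneg (w (x, z))]

end IsDivCurlFreeOnStrip
end Strip

theorem HasFDerivAt.hasDerivAt_slice_fst {f : ℝ × ℝ → ℝ} {f' : ℝ × ℝ →L[ℝ] ℝ} {x z : ℝ}
    (hf : HasFDerivAt f f' (x, z)) : HasDerivAt (fun x => f (x, z)) (f' (1, 0)) x :=
  hf.comp_hasDerivAt x ((hasDerivAt_id x).prodMk (hasDerivAt_const x z))

theorem HasFDerivAt.hasDerivAt_slice_snd {f : ℝ × ℝ → ℝ} {f' : ℝ × ℝ →L[ℝ] ℝ} {x z : ℝ}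
    (hf : HasFDerivAt f f' (x, z)) : HasDerivAt (fun z => f (x, z)) (f' (0, 1)) z :=
  hf.comp_hasDerivAt z ((hasDerivAt_const z x).prodMk (hasDerivAt_id z))

theorem isDivCurlFreeOnStrip_of_contDiffOn {s : ℝ} (hs : s ≠ 0) {V w : ℝ × ℝ → ℝ}
    (hV : ContDiffOn ℝ 1 V (univ ×ˢ Icc (-1) 0)) (hw : ContDiffOn ℝ 1 w (univ ×ˢ Icc (-1) 0))
    (hdiv : ∀ p ∈ univ ×ˢ Ioo (-1 : ℝ) 0, s * fderivWithin ℝ V (univ ×ˢ Icc (-1) 0) p (1, 0)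
      + fderivWithin ℝ w (univ ×ˢ Icc (-1) 0) p (0, 1) = 0)
    (hcurl : ∀ p ∈ univ ×ˢ Ioo (-1 : ℝ) 0, fderivWithin ℝ V (univ ×ˢ Icc (-1) 0) p (0, 1)
      - s * fderivWithin ℝ w (univ ×ˢ Icc (-1) 0) p (1, 0) = 0) :
    IsDivCurlFreeOnStrip s V w (fun p => fderivWithin ℝ V (univ ×ˢ Icc (-1) 0) p (0, 1))
      (fun p => fderivWithin ℝ w (univ ×ˢ Icc (-1) 0) p (0, 1)) := by
  have hud : UniqueDiffOn ℝ ((univ : Set ℝ) ×ˢ Icc (-1 : ℝ) 0) :=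
    uniqueDiffOn_univ.prod (uniqueDiffOn_Icc (by norm_num))
  have hfderiv : ∀ {f : ℝ × ℝ → ℝ}, ContDiffOn ℝ 1 f (univ ×ˢ Icc (-1) 0) → ∀ {x z : ℝ},
      z ∈ Ioo (-1 : ℝ) 0 → HasFDerivAt f (fderivWithin ℝ f (univ ×ˢ Icc (-1) 0) (x, z)) (x, z) :=
    fun hf _ _ hz => ((hf.differentiableOn one_ne_zero) _ ⟨trivial, Ioo_subset_Icc_self hz⟩
      ).hasFDerivWithinAt.hasFDerivAt (prod_mem_nhds univ_mem (Icc_mem_nhds hz.1 hz.2))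
  exact
    { continuousOn_V := hV.continuousOn
      continuousOn_w := hw.continuousOn
      continuousOn_Vz := (hV.continuousOn_fderivWithin hud le_rfl).clm_apply continuousOn_const
      continuousOn_Wz := (hw.continuousOn_fderivWithin hud le_rfl).clm_apply continuousOn_const
      hasDerivAt_V_fst := fun x z hz => (hfderiv hV hz).hasDerivAt_slice_fst.congr_deriv <| by
        rw [eq_div_iff hs]; linarith [hdiv (x, z) ⟨trivial, hz⟩]
      hasDerivAt_V_snd := fun _ _ hz => (hfderiv hV hz).hasDerivAt_slice_snd
      hasDerivAt_w_fst := fun x z hz => (hfderiv hw hz).hasDerivAt_slice_fst.congr_deriv <| by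
        rw [eq_div_iff hs]; linarith [hcurl (x, z) ⟨trivial, hz⟩]
      hasDerivAt_w_snd := fun _ _ hz => (hfderiv hw hz).hasDerivAt_slice_snd }

/-- Uniqueness for the div-curl problem on the flat strip in horizontal
dimension `d = 1` (rigid lid model). -/
theorem div_curl_uniqueness_dim1
    (μ : ℝ) (hμ : 0 < μ)
    (V w : ℝ × ℝ → ℝ)
    (S Scl : Set (ℝ × ℝ))
    (hS : S = {p | p.2 ∈ Ioo (-1 : ℝ) 0})
    (hScl : Scl = {p | p.2 ∈ Icc (-1 : ℝ) 0})
    (hV : ContDiffOn ℝ 1 V Scl)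
    (hw : ContDiffOn ℝ 1 w Scl)
    (hL2 : IntegrableOn (fun p => (V p) ^ 2 + (w p) ^ 2) S)
    (hdiv : ∀ p ∈ S,
      Real.sqrt μ * fderivWithin ℝ V Scl p (1, 0)
        + fderivWithin ℝ w Scl p (0, 1) = 0)
    (hcurl : ∀ p ∈ S,
      fderivWithin ℝ V Scl p (0, 1)
        - Real.sqrt μ * fderivWithin ℝ w Scl p (1, 0) = 0)
    (hbot : ∀ x : ℝ, w (x, -1) = 0)
    (htop : ∀ x : ℝ, w (x, 0) = 0) :
    ∀ p ∈ S, V p = 0 ∧ w p = 0 := by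
  obtain rfl : S = univ ×ˢ Ioo (-1) 0 := hS.trans univ_prod.symm
  obtain rfl : Scl = univ ×ˢ Icc (-1) 0 := hScl.trans univ_prod.symm
  have hs : √μ ≠ 0 := (Real.sqrt_pos.2 hμ).ne'
  rintro ⟨x, z⟩ ⟨-, hz⟩
  exact (isDivCurlFreeOnStrip_of_contDiffOn hs hV hw hdiv hcurl).eq_zero hs hbot htop hL2 hz
end

section
/- Let μ > 0 and 0 < γ ≤ 1. Let Φ : ℝ² × [−1, 0] → ℝ be twice continuously differentiable on the closed strip S = ℝ² × (−1, 0), satisfying the anisotropic Laplace equation μ ∂ₓ²Φ + γ²μ ∂_y²Φ + ∂_z²Φ = 0 on S, the Neumann boundary conditions ∂_zΦ(x, y, 0) = 0 and ∂_zΦ(x, y, −1) = 0 for all (x, y) ∈ ℝ², and such that the scaled gradient ∇^{μ,γ}Φ = (√μ ∂ₓΦ, γ√μ ∂_yΦ, ∂_zΦ) is square integrable on S. Then ∇^{μ,γ}Φ = 0 identically on S. -/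
/-!
Test the equation against `ψ_R = η_R(x) η_R(y) arctan Φ`, where `η_R` is a smooth cutoff equal
to `1` on `[-R, R]` and supported in `[-2R, 2R]`. The Neumann conditions kill the boundary terms
of Green's formula, so that
`∫ η_R(x) η_R(y) |∇^{μ,γ}Φ|² / (1 + Φ²) = -∫ arctan Φ ∇^{μ,γ}(η_R(x) η_R(y)) · ∇^{μ,γ}Φ`.
The right-hand side lives where `R ≤ max(|x|, |y|) ≤ 2R`, a region of volume `O(R²)` on which
`∇(η_R(x) η_R(y)) = O(1/R)`; by AM-GM it is at most `δ K + ε_R / δ`, where `ε_R` is the energy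
of `Φ` outside the column `max(|x|, |y|) < R`, which tends to `0` because `∇^{μ,γ}Φ ∈ L²`.
Letting `R → ∞` and then `δ → 0` gives `∫ |∇^{μ,γ}Φ|² / (1 + Φ²) = 0`. The bounded truncation
`arctan Φ` stands in for `Φ`, about whose size nothing is assumed.
-/

open MeasureTheory Set Filter Topology

namespace NeumannStrip

/-! ### Elementary estimates -/

lemma integral_deriv_eq_zero_of_hasCompactSupport {f : ℝ → ℝ} (hf : ContDiff ℝ 1 f)
    (hsupp : HasCompactSupport f) : ∫ x, deriv f x = 0 :=
  integral_eq_zero_of_hasDerivAt_of_integrable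
    (fun x => (hf.differentiable one_ne_zero x).hasDerivAt)
    ((hf.continuous_deriv le_rfl).integrable_of_hasCompactSupport hsupp.deriv)
    (hf.continuous.integrable_of_hasCompactSupport hsupp)

lemma tendsto_integral_of_eventually_eq {α : Type*} [MeasurableSpace α] {μ : Measure α}
    {f : ℕ → α → ℝ} {g bound : α → ℝ} (hf : ∀ n, AEStronglyMeasurable (f n) μ)
    (hbound : Integrable bound μ) (hle : ∀ n x, |f n x| ≤ bound x)
    (hlim : ∀ x, ∀ᶠ n in atTop, f n x = g x) :
    Tendsto (fun n => ∫ x, f n x ∂μ) atTop (𝓝 (∫ x, g x ∂μ)) :=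
  tendsto_integral_of_dominated_convergence bound hf hbound
    (fun n => Eventually.of_forall (hle n))
    (Eventually.of_forall fun x => tendsto_const_nhds.congr' ((hlim x).mono fun _ h => h.symm))

lemma nonpos_of_forall_le_add_div {a ε : ℕ → ℝ} {I K : ℝ} (ha : Tendsto a atTop (𝓝 I))
    (hε : Tendsto ε atTop (𝓝 0)) (h : ∀ δ > 0, ∀ᶠ n in atTop, a n ≤ δ * K + ε n / δ) :
    I ≤ 0 := by
  have hI : ∀ δ > 0, I ≤ δ * K := fun δ hδ => by
    simpa using le_of_tendsto_of_tendsto ha (tendsto_const_nhds.add (hε.div_const δ)) (h δ hδ)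
  have hlim : Tendsto (fun δ : ℝ => δ * K) (𝓝[>] 0) (𝓝 0) :=
    ((continuous_mul_const K).tendsto' 0 0 (zero_mul K)).mono_left nhdsWithin_le_nhds
  exact ge_of_tendsto hlim (eventually_nhdsWithin_of_forall hI)

lemma abs_arctan_le_two (x : ℝ) : |Real.arctan x| ≤ 2 :=
  abs_le.mpr ⟨by linarith [Real.neg_pi_div_two_lt_arctan x, Real.pi_le_four],
    by linarith [Real.arctan_lt_pi_div_two x, Real.pi_le_four]⟩

lemma two_mul_mul_abs_le {c δ : ℝ} (hδ : 0 < δ) (s : ℝ) :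
    2 * (c * |s|) ≤ δ * c ^ 2 + s ^ 2 / δ := by
  have : δ * c ^ 2 + s ^ 2 / δ - 2 * (c * |s|) = (δ * c - |s|) ^ 2 / δ := by
    field_simp
    rw [sub_sq, sq_abs]
    ring
  linarith [div_nonneg (sq_nonneg (δ * c - |s|)) hδ.le]

lemma abs_mul_flux_le {t e₁ e₂ X Y Z c δ μ γ : ℝ} (hμ : 0 ≤ μ) (hδ : 0 < δ) (ht : |t| ≤ 2)
    (he₁ : |e₁| ≤ c) (he₂ : |e₂| ≤ c) :
    |t * (μ * e₁ * X + γ ^ 2 * μ * e₂ * Y)|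
      ≤ δ * ((1 + γ ^ 2) * μ * c ^ 2) + (μ * X ^ 2 + γ ^ 2 * μ * Y ^ 2 + Z ^ 2) / δ := by
  have hγμ : 0 ≤ γ ^ 2 * μ := by positivity
  calc |t * (μ * e₁ * X + γ ^ 2 * μ * e₂ * Y)|
      ≤ 2 * (μ * |e₁| * |X| + γ ^ 2 * μ * |e₂| * |Y|) := by
        rw [abs_mul]
        refine mul_le_mul ht ((abs_add_le _ _).trans (le_of_eq ?_)) (abs_nonneg _) zero_le_two
        rw [abs_mul, abs_mul, abs_mul, abs_mul, abs_of_nonneg hμ, abs_of_nonneg hγμ]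
    _ ≤ μ * (2 * (c * |X|)) + γ ^ 2 * μ * (2 * (c * |Y|)) := by
        nlinarith [mul_le_mul_of_nonneg_left he₁ (mul_nonneg hμ (abs_nonneg X)),
          mul_le_mul_of_nonneg_left he₂ (mul_nonneg hγμ (abs_nonneg Y))]
    _ ≤ μ * (δ * c ^ 2 + X ^ 2 / δ) + γ ^ 2 * μ * (δ * c ^ 2 + Y ^ 2 / δ) := by
        gcongr <;> exact two_mul_mul_abs_le hδ _
    _ ≤ δ * ((1 + γ ^ 2) * μ * c ^ 2) + (μ * X ^ 2 + γ ^ 2 * μ * Y ^ 2 + Z ^ 2) / δ := by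
        have : 0 ≤ Z ^ 2 / δ := by positivity
        rw [add_div, add_div]
        nlinarith [mul_div_assoc μ (X ^ 2) δ, mul_div_assoc (γ ^ 2 * μ) (Y ^ 2) δ]

/-! ### The strip -/

def strip (a b : ℝ) : Set (ℝ × ℝ × ℝ) := {p | p.2.2 ∈ Ioo a b}

def closedStrip (a b : ℝ) : Set (ℝ × ℝ × ℝ) := {p | p.2.2 ∈ Icc a b}

def column (ρ : ℝ) : Set (ℝ × ℝ × ℝ) := Icc (-ρ) ρ ×ˢ Icc (-ρ) ρ ×ˢ univ

def outside (R : ℝ) : Set (ℝ × ℝ × ℝ) := {p | R ≤ |p.1| ∨ R ≤ |p.2.1|}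

lemma measurableSet_outside (R : ℝ) : MeasurableSet (outside R) :=
  ((isClosed_le continuous_const (continuous_abs.comp continuous_fst)).union
    (isClosed_le continuous_const (continuous_abs.comp continuous_snd.fst))).measurableSet

variable {a b : ℝ}

lemma strip_eq_prod : strip a b = univ ×ˢ univ ×ˢ Ioo a b := by
  ext; simp [strip]

lemma closedStrip_eq_prod : closedStrip a b = univ ×ˢ univ ×ˢ Icc a b := by
  ext; simp [closedStrip]

lemma isOpen_strip : IsOpen (strip a b) :=
  isOpen_Ioo.preimage (continuous_snd.comp continuous_snd)

lemma strip_subset_closedStrip : strip a b ⊆ closedStrip a b :=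
  fun _ hp => Ioo_subset_Icc_self hp

lemma closedStrip_mem_nhds {p : ℝ × ℝ × ℝ} (hp : p ∈ strip a b) : closedStrip a b ∈ 𝓝 p :=
  mem_of_superset (isOpen_strip.mem_nhds hp) strip_subset_closedStrip

lemma uniqueDiffOn_closedStrip (hab : a < b) : UniqueDiffOn ℝ (closedStrip a b) := by
  rw [closedStrip_eq_prod]
  exact uniqueDiffOn_univ.prod (uniqueDiffOn_univ.prod (uniqueDiffOn_Icc hab))

lemma isClosed_column (ρ : ℝ) : IsClosed (column ρ) :=
  isClosed_Icc.prod (isClosed_Icc.prod isClosed_univ)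

lemma mem_column {ρ : ℝ} {p : ℝ × ℝ × ℝ} : p ∈ column ρ ↔ |p.1| ≤ ρ ∧ |p.2.1| ≤ ρ := by
  simp [column, abs_le]

lemma strip_inter_column (ρ : ℝ) :
    strip a b ∩ column ρ = Icc (-ρ) ρ ×ˢ Icc (-ρ) ρ ×ˢ Ioo a b := by
  ext; simp [strip, column, and_comm, and_left_comm]

lemma closedStrip_inter_column (ρ : ℝ) :
    closedStrip a b ∩ column ρ = Icc (-ρ) ρ ×ˢ Icc (-ρ) ρ ×ˢ Icc a b := by
  ext
  simp only [closedStrip, column, mem_inter_iff, mem_ofPred_eq, mem_prod, mem_univ, and_true]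
  tauto

lemma volume_strip_inter_column_lt_top (ρ : ℝ) : volume (strip a b ∩ column ρ) < ⊤ := by
  refine (measure_mono (inter_subset_inter_left _ strip_subset_closedStrip)).trans_lt ?_
  rw [closedStrip_inter_column]
  exact (isCompact_Icc.prod (isCompact_Icc.prod isCompact_Icc)).measure_lt_top

lemma integrableOn_strip_of_continuousOn {f : ℝ × ℝ × ℝ → ℝ} {ρ : ℝ}
    (hf : ContinuousOn f (closedStrip a b)) (hsupp : ∀ p ∈ strip a b \ column ρ, f p = 0) :
    IntegrableOn f (strip a b) := by
  have hK : IsCompact (closedStrip a b ∩ column ρ) := by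
    rw [closedStrip_inter_column]
    exact isCompact_Icc.prod (isCompact_Icc.prod isCompact_Icc)
  refine (hf.mono inter_subset_left).integrableOn_compact hK |>.of_forall_sdiff_eq_zero
    isOpen_strip.measurableSet fun p hp => hsupp p ⟨hp.1, fun hc => hp.2 ⟨?_, hc⟩⟩
  exact strip_subset_closedStrip hp.1

lemma volume_restrict_strip :
    volume.restrict (strip a b) = volume.prod (volume.prod (volume.restrict (Ioo a b))) := by
  rw [strip_eq_prod, Measure.volume_eq_prod, ← Measure.prod_restrict, Measure.volume_eq_prod,
    ← Measure.prod_restrict, Measure.restrict_univ]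

lemma measureReal_strip_inter_column {ρ : ℝ} (hρ : 0 ≤ ρ) (hab : a ≤ b) :
    volume.real (strip a b ∩ column ρ) = (2 * ρ) ^ 2 * (b - a) := by
  rw [strip_inter_column, Measure.volume_eq_prod, measureReal_prod_prod, Measure.volume_eq_prod,
    measureReal_prod_prod]
  simp [Real.volume_real_Icc, Real.volume_real_Ioo, hab, hρ]
  ring

lemma setIntegral_strip_eq_zero_of_x_slices {g : ℝ × ℝ × ℝ → ℝ} (hg : IntegrableOn g (strip a b))
    (h : ∀ y, ∀ z ∈ Ioo a b, ∫ x, g (x, y, z) = 0) : ∫ p in strip a b, g p = 0 := by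
  rw [IntegrableOn, volume_restrict_strip] at hg
  rw [volume_restrict_strip, integral_prod_symm _ hg, integral_prod _ hg.integral_prod_right]
  refine integral_eq_zero_of_ae (Eventually.of_forall fun y => ?_)
  exact integral_eq_zero_of_ae ((ae_restrict_mem measurableSet_Ioo).mono fun z hz => h y z hz)

lemma setIntegral_strip_eq_zero_of_y_slices {g : ℝ × ℝ × ℝ → ℝ} (hg : IntegrableOn g (strip a b))
    (h : ∀ x, ∀ z ∈ Ioo a b, ∫ y, g (x, y, z) = 0) : ∫ p in strip a b, g p = 0 := by
  rw [IntegrableOn, volume_restrict_strip] at hg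
  rw [volume_restrict_strip, integral_prod _ hg]
  refine integral_eq_zero_of_ae (hg.prod_right_ae.mono fun x hx => ?_)
  dsimp only
  rw [integral_prod_symm _ hx]
  exact integral_eq_zero_of_ae ((ae_restrict_mem measurableSet_Ioo).mono fun z hz => h x z hz)

lemma setIntegral_strip_eq_zero_of_z_slices {g : ℝ × ℝ × ℝ → ℝ} (hg : IntegrableOn g (strip a b))
    (h : ∀ x y, ∫ z in Ioo a b, g (x, y, z) = 0) : ∫ p in strip a b, g p = 0 := by
  rw [IntegrableOn, volume_restrict_strip] at hg
  rw [volume_restrict_strip, integral_prod _ hg]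
  refine integral_eq_zero_of_ae (hg.prod_right_ae.mono fun x hx => ?_)
  dsimp only
  rw [integral_prod _ hx]
  simp [h]

lemma eventually_lt_natCast (p : ℝ × ℝ × ℝ) :
    ∀ᶠ n : ℕ in atTop, 0 < (n : ℝ) ∧ |p.1| < n ∧ |p.2.1| < n :=
  (tendsto_natCast_atTop_atTop.eventually (eventually_gt_atTop (|p.1| + |p.2.1|))).mono
    fun n hn => ⟨lt_of_le_of_lt (by positivity) hn, by linarith [abs_nonneg p.2.1],
      by linarith [abs_nonneg p.1]⟩

/-! ### Integration by parts on the strip -/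

variable {F : ℝ × ℝ × ℝ → ℝ} {ρ : ℝ}

lemma hasFDerivAt_of_mem_strip (hF : DifferentiableOn ℝ F (closedStrip a b)) {p : ℝ × ℝ × ℝ}
    (hp : p ∈ strip a b) : HasFDerivAt F (fderivWithin ℝ F (closedStrip a b) p) p :=
  (hF p (strip_subset_closedStrip hp)).hasFDerivWithinAt.hasFDerivAt (closedStrip_mem_nhds hp)

lemma fderivWithin_eq_zero_of_notMem_column (hab : a < b) (hsupp : Function.support F ⊆ column ρ)
    {p : ℝ × ℝ × ℝ} (hp : p ∈ closedStrip a b) (hpρ : p ∉ column ρ) :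
    fderivWithin ℝ F (closedStrip a b) p = 0 :=
  (HasFDerivWithinAt.of_notMem_tsupport ℝ
    (fun h => hpρ (closure_minimal hsupp (isClosed_column ρ) h))).fderivWithin
    (uniqueDiffOn_closedStrip hab p hp)

lemma integrableOn_strip_fderivWithin (hab : a < b) (hF : ContDiffOn ℝ 1 F (closedStrip a b))
    (hsupp : Function.support F ⊆ column ρ) (v : ℝ × ℝ × ℝ) :
    IntegrableOn (fun p => fderivWithin ℝ F (closedStrip a b) p v) (strip a b) := by
  refine integrableOn_strip_of_continuousOn (ρ := ρ)
    ((hF.continuousOn_fderivWithin (uniqueDiffOn_closedStrip hab) le_rfl).clm_apply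
      continuousOn_const) fun p hp => ?_
  rw [fderivWithin_eq_zero_of_notMem_column hab hsupp (strip_subset_closedStrip hp.1) hp.2,
    zero_apply]

lemma setIntegral_fderivWithin_x_eq_zero (hab : a < b) (hF : ContDiffOn ℝ 1 F (closedStrip a b))
    (hsupp : Function.support F ⊆ column ρ) :
    ∫ p in strip a b, fderivWithin ℝ F (closedStrip a b) p (1, 0, 0) = 0 := by
  refine setIntegral_strip_eq_zero_of_x_slices (integrableOn_strip_fderivWithin hab hF hsupp _)
    fun y z hz => ?_
  have hline : ContDiff ℝ 1 fun x => F (x, y, z) :=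
    hF.comp_contDiff (by fun_prop) fun x => Ioo_subset_Icc_self hz
  have hderiv : deriv (fun x => F (x, y, z)) = fun x =>
      fderivWithin ℝ F (closedStrip a b) (x, y, z) (1, 0, 0) := by
    funext x
    exact ((hasFDerivAt_of_mem_strip (hF.differentiableOn one_ne_zero) hz).comp_hasDerivAt x
      ((hasDerivAt_id x).prodMk ((hasDerivAt_const x y).prodMk (hasDerivAt_const x z)))).deriv
  rw [← hderiv]
  refine integral_deriv_eq_zero_of_hasCompactSupport hline
    (HasCompactSupport.intro (isCompact_Icc (a := -ρ) (b := ρ)) fun x hx => ?_)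
  exact Function.notMem_support.mp fun h => hx (abs_le.mp (mem_column.mp (hsupp h)).1)

lemma setIntegral_fderivWithin_y_eq_zero (hab : a < b) (hF : ContDiffOn ℝ 1 F (closedStrip a b))
    (hsupp : Function.support F ⊆ column ρ) :
    ∫ p in strip a b, fderivWithin ℝ F (closedStrip a b) p (0, 1, 0) = 0 := by
  refine setIntegral_strip_eq_zero_of_y_slices (integrableOn_strip_fderivWithin hab hF hsupp _)
    fun x z hz => ?_
  have hline : ContDiff ℝ 1 fun y => F (x, y, z) :=
    hF.comp_contDiff (by fun_prop) fun y => Ioo_subset_Icc_self hz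
  have hderiv : deriv (fun y => F (x, y, z)) = fun y =>
      fderivWithin ℝ F (closedStrip a b) (x, y, z) (0, 1, 0) := by
    funext y
    exact ((hasFDerivAt_of_mem_strip (hF.differentiableOn one_ne_zero) hz).comp_hasDerivAt y
      ((hasDerivAt_const y x).prodMk ((hasDerivAt_id y).prodMk (hasDerivAt_const y z)))).deriv
  rw [← hderiv]
  refine integral_deriv_eq_zero_of_hasCompactSupport hline
    (HasCompactSupport.intro (isCompact_Icc (a := -ρ) (b := ρ)) fun y hy => ?_)
  exact Function.notMem_support.mp fun h => hy (abs_le.mp (mem_column.mp (hsupp h)).2)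

lemma setIntegral_fderivWithin_z_eq_zero (hab : a < b) (hF : ContDiffOn ℝ 1 F (closedStrip a b))
    (hsupp : Function.support F ⊆ column ρ) (htop : ∀ x y, F (x, y, b) = 0)
    (hbot : ∀ x y, F (x, y, a) = 0) :
    ∫ p in strip a b, fderivWithin ℝ F (closedStrip a b) p (0, 0, 1) = 0 := by
  refine setIntegral_strip_eq_zero_of_z_slices (integrableOn_strip_fderivWithin hab hF hsupp _)
    fun x y => ?_
  have hmaps : MapsTo (fun z : ℝ => (x, y, z)) (Icc a b) (closedStrip a b) := fun _ hz => hz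
  have hcont : ContinuousOn (fun p => fderivWithin ℝ F (closedStrip a b) p (0, 0, 1))
      (closedStrip a b) :=
    (hF.continuousOn_fderivWithin (uniqueDiffOn_closedStrip hab) le_rfl).clm_apply
      continuousOn_const
  have hFTC := intervalIntegral.integral_eq_sub_of_hasDerivAt_of_le hab.le
    (hF.continuousOn.comp (by fun_prop) hmaps)
    (fun z hz => (hasFDerivAt_of_mem_strip (hF.differentiableOn one_ne_zero) hz).comp_hasDerivAt z
      ((hasDerivAt_const z x).prodMk ((hasDerivAt_const z y).prodMk (hasDerivAt_id z))))
    ((hcont.comp (by fun_prop) hmaps).intervalIntegrable_of_Icc hab.le)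
  rw [← integral_Ioc_eq_integral_Ioo, ← intervalIntegral.integral_of_le hab.le]
  simpa [htop, hbot] using hFTC

lemma fderivWithin_mul_apply_of_mem_closedStrip (hab : a < b) {f g : ℝ × ℝ × ℝ → ℝ}
    (hf : ContDiffOn ℝ 1 f (closedStrip a b)) (hg : ContDiffOn ℝ 1 g (closedStrip a b))
    {p : ℝ × ℝ × ℝ} (hp : p ∈ closedStrip a b) (v : ℝ × ℝ × ℝ) :
    fderivWithin ℝ (fun q => f q * g q) (closedStrip a b) p v =
      f p * fderivWithin ℝ g (closedStrip a b) p v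
        + g p * fderivWithin ℝ f (closedStrip a b) p v := by
  rw [fderivWithin_fun_mul (uniqueDiffOn_closedStrip hab p hp)
    ((hf.differentiableOn one_ne_zero) p hp) ((hg.differentiableOn one_ne_zero) p hp)]
  rfl

theorem setIntegral_grad_mul_eq_zero_of_div_eq_zero (hab : a < b) {c₁ c₂ : ℝ}
    {ψ G₁ G₂ G₃ : ℝ × ℝ × ℝ → ℝ} (hψ : ContDiffOn ℝ 1 ψ (closedStrip a b))
    (hsupp : Function.support ψ ⊆ column ρ) (hG₁ : ContDiffOn ℝ 1 G₁ (closedStrip a b))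
    (hG₂ : ContDiffOn ℝ 1 G₂ (closedStrip a b)) (hG₃ : ContDiffOn ℝ 1 G₃ (closedStrip a b))
    (hdiv : ∀ p ∈ strip a b,
      c₁ * fderivWithin ℝ G₁ (closedStrip a b) p (1, 0, 0)
        + c₂ * fderivWithin ℝ G₂ (closedStrip a b) p (0, 1, 0)
        + fderivWithin ℝ G₃ (closedStrip a b) p (0, 0, 1) = 0)
    (htop : ∀ x y, G₃ (x, y, b) = 0) (hbot : ∀ x y, G₃ (x, y, a) = 0) :
    ∫ p in strip a b,
      (c₁ * fderivWithin ℝ ψ (closedStrip a b) p (1, 0, 0) * G₁ p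
        + c₂ * fderivWithin ℝ ψ (closedStrip a b) p (0, 1, 0) * G₂ p
        + fderivWithin ℝ ψ (closedStrip a b) p (0, 0, 1) * G₃ p) = 0 := by
  have hsupp' : ∀ G : ℝ × ℝ × ℝ → ℝ, Function.support (fun q => ψ q * G q) ⊆ column ρ :=
    fun G => (Function.support_mul_subset_left _ _).trans hsupp
  have hpt : ∀ p ∈ strip a b,
      c₁ * fderivWithin ℝ ψ (closedStrip a b) p (1, 0, 0) * G₁ p
        + c₂ * fderivWithin ℝ ψ (closedStrip a b) p (0, 1, 0) * G₂ p
        + fderivWithin ℝ ψ (closedStrip a b) p (0, 0, 1) * G₃ p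
      = c₁ * fderivWithin ℝ (fun q => ψ q * G₁ q) (closedStrip a b) p (1, 0, 0)
        + c₂ * fderivWithin ℝ (fun q => ψ q * G₂ q) (closedStrip a b) p (0, 1, 0)
        + fderivWithin ℝ (fun q => ψ q * G₃ q) (closedStrip a b) p (0, 0, 1) := by
    intro p hp
    have hp' := strip_subset_closedStrip hp
    rw [fderivWithin_mul_apply_of_mem_closedStrip hab hψ hG₁ hp',
      fderivWithin_mul_apply_of_mem_closedStrip hab hψ hG₂ hp',
      fderivWithin_mul_apply_of_mem_closedStrip hab hψ hG₃ hp']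
    linear_combination -ψ p * hdiv p hp
  have hint : ∀ (G : ℝ × ℝ × ℝ → ℝ), ContDiffOn ℝ 1 G (closedStrip a b) → ∀ v,
      IntegrableOn (fun p => fderivWithin ℝ (fun q => ψ q * G q) (closedStrip a b) p v)
        (strip a b) :=
    fun G hG => integrableOn_strip_fderivWithin hab (hψ.mul hG) (hsupp' G)
  rw [setIntegral_congr_fun isOpen_strip.measurableSet hpt,
    integral_add (((hint G₁ hG₁ _).const_mul c₁).fun_add ((hint G₂ hG₂ _).const_mul c₂))
      (hint G₃ hG₃ _),
    integral_add ((hint G₁ hG₁ _).const_mul c₁) ((hint G₂ hG₂ _).const_mul c₂),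
    integral_const_mul, integral_const_mul,
    setIntegral_fderivWithin_x_eq_zero hab (hψ.mul hG₁) (hsupp' _),
    setIntegral_fderivWithin_y_eq_zero hab (hψ.mul hG₂) (hsupp' _),
    setIntegral_fderivWithin_z_eq_zero hab (hψ.mul hG₃) (hsupp' _) (by simp [htop])
      (by simp [hbot])]
  ring

/-! ### Cutoff functions -/

noncomputable def bump : ContDiffBump (0 : ℝ) := ⟨1, 2, one_pos, one_lt_two⟩

noncomputable def cutoff (R x : ℝ) : ℝ := bump (x / R)

lemma deriv_bump_ne_zero {t : ℝ} (ht : deriv bump t ≠ 0) : 1 ≤ |t| ∧ |t| ≤ 2 := by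
  constructor
  · by_contra! h
    refine ht ((bump.eventuallyEq_one_of_mem_ball ?_).deriv_eq.trans (deriv_const t 1))
    simpa [bump] using h
  · have := bump.tsupport_eq ▸ support_deriv_subset ht
    simpa [bump] using this

lemma exists_abs_deriv_bump_le : ∃ C, ∀ t, |deriv bump t| ≤ C :=
  bump.hasCompactSupport.deriv.exists_bound_of_continuous
    (bump.contDiff.continuous_deriv (n := 1) le_rfl)

variable {R x : ℝ}

lemma contDiff_cutoff (R : ℝ) : ContDiff ℝ 1 (cutoff R) :=
  bump.contDiff.comp (contDiff_id.div_const R)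

@[fun_prop]
lemma continuous_cutoff (R : ℝ) : Continuous (cutoff R) := (contDiff_cutoff R).continuous

lemma cutoff_nonneg : 0 ≤ cutoff R x := bump.nonneg

lemma cutoff_le_one : cutoff R x ≤ 1 := bump.le_one

lemma abs_cutoff_le_one : |cutoff R x| ≤ 1 :=
  abs_le.mpr ⟨by linarith [cutoff_nonneg (R := R) (x := x)], cutoff_le_one⟩

lemma abs_cutoff_mul_cutoff_mul_le (R x y t : ℝ) : |cutoff R x * cutoff R y * t| ≤ |t| := by
  rw [abs_mul, abs_mul]
  exact mul_le_of_le_one_left (abs_nonneg t)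
    (mul_le_one₀ abs_cutoff_le_one (abs_nonneg _) abs_cutoff_le_one)

lemma cutoff_eq_one (hR : 0 < R) (hx : |x| ≤ R) : cutoff R x = 1 :=
  bump.one_of_mem_closedBall (by simpa [bump, abs_div, abs_of_pos hR, div_le_one hR] using hx)

lemma cutoff_ne_zero (hR : 0 < R) (hx : cutoff R x ≠ 0) : |x| ≤ 2 * R := by
  by_contra! h
  refine hx (bump.zero_of_le_dist ?_)
  change (2 : ℝ) ≤ dist (x / R) 0
  rw [Real.dist_eq, sub_zero, abs_div, abs_of_pos hR, le_div_iff₀ hR]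
  linarith

@[fun_prop]
lemma continuous_deriv_cutoff (R : ℝ) : Continuous (deriv (cutoff R)) :=
  (contDiff_cutoff R).continuous_deriv le_rfl

lemma deriv_cutoff (R x : ℝ) : deriv (cutoff R) x = deriv bump (x / R) / R := by
  have : HasDerivAt (cutoff R) (deriv bump (x / R) * (1 / R)) x :=
    (bump.contDiff.differentiable one_ne_zero (x / R)).hasDerivAt.comp x
      ((hasDerivAt_id x).div_const R)
  rw [this.deriv, mul_one_div]

lemma deriv_cutoff_ne_zero (hR : 0 < R) (hx : deriv (cutoff R) x ≠ 0) : R ≤ |x| ∧ |x| ≤ 2 * R := by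
  rw [deriv_cutoff] at hx
  have := deriv_bump_ne_zero (left_ne_zero_of_mul hx)
  rw [abs_div, abs_of_pos hR, le_div_iff₀ hR, div_le_iff₀ hR] at this
  constructor <;> linarith [this.1, this.2]

lemma exists_abs_deriv_cutoff_le : ∃ C, ∀ R > 0, ∀ x, |deriv (cutoff R) x| ≤ C / R := by
  obtain ⟨C, hC⟩ := exists_abs_deriv_bump_le
  refine ⟨C, fun R hR x => ?_⟩
  rw [deriv_cutoff, abs_div, abs_of_pos hR]
  exact div_le_div_of_nonneg_right (hC _) hR.le

lemma fderivWithin_cutoff_mul_arctan_apply {s : Set (ℝ × ℝ × ℝ)} {u : ℝ × ℝ × ℝ → ℝ}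
    {p : ℝ × ℝ × ℝ} (hs : UniqueDiffWithinAt ℝ s p) (hu : DifferentiableWithinAt ℝ u s p)
    (R : ℝ) (v : ℝ × ℝ × ℝ) :
    fderivWithin ℝ (fun q => cutoff R q.1 * cutoff R q.2.1 * Real.arctan (u q)) s p v =
      (deriv (cutoff R) p.1 * v.1 * cutoff R p.2.1
          + cutoff R p.1 * (deriv (cutoff R) p.2.1 * v.2.1)) * Real.arctan (u p)
        + cutoff R p.1 * cutoff R p.2.1 * (fderivWithin ℝ u s p v / (1 + u p ^ 2)) := by
  have hη : ∀ t, HasDerivAt (cutoff R) (deriv (cutoff R) t) t :=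
    fun t => ((contDiff_cutoff R).differentiable one_ne_zero t).hasDerivAt
  have hx := (hη p.1).comp_hasFDerivAt p (hasFDerivAt_fst (𝕜 := ℝ) (p := p))
  have hy := (hη p.2.1).comp_hasFDerivAt p ((hasFDerivAt_snd (𝕜 := ℝ) (p := p)).fst)
  have hψ : HasFDerivWithinAt (fun q => cutoff R q.1 * cutoff R q.2.1 * Real.arctan (u q)) _ s p :=
    (hx.mul hy).hasFDerivWithinAt.mul hu.hasFDerivWithinAt.arctan
  rw [hψ.fderivWithin hs]
  simp only [Pi.mul_apply, Function.comp_apply, one_div, smul_add, add_apply, smul_apply,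
    smul_eq_mul, ContinuousLinearMap.comp_apply, ContinuousLinearMap.coe_snd',
    ContinuousLinearMap.coe_fst']
  ring

theorem eqOn_zero_of_setIntegral_cutoff_le {S : Set (ℝ × ℝ × ℝ)} (hS : IsOpen S)
    {f g : ℝ × ℝ × ℝ → ℝ} {K : ℝ} (hf : ContinuousOn f S) (hf0 : ∀ p, 0 ≤ f p)
    (hfi : IntegrableOn f S) (hgi : IntegrableOn g S)
    (h : ∀ R > 0, ∀ δ > 0, ∫ p in S, cutoff R p.1 * cutoff R p.2.1 * f p
      ≤ δ * K + (∫ p in S, (outside R).indicator g p) / δ) :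
    EqOn f 0 S := by
  have hlim₁ : Tendsto (fun n : ℕ => ∫ p in S, cutoff n p.1 * cutoff n p.2.1 * f p) atTop
      (𝓝 (∫ p in S, f p)) := by
    refine tendsto_integral_of_eventually_eq (fun n => ?_) hfi (fun n p => ?_)
      fun p => (eventually_lt_natCast p).mono fun n hn => ?_
    · exact (((continuous_cutoff n).comp continuous_fst).mul
        ((continuous_cutoff n).comp continuous_snd.fst)).aestronglyMeasurable.mul
          hfi.aestronglyMeasurable
    · exact (abs_cutoff_mul_cutoff_mul_le _ _ _ _).trans (abs_of_nonneg (hf0 p)).le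
    · rw [cutoff_eq_one hn.1 hn.2.1.le, cutoff_eq_one hn.1 hn.2.2.le, one_mul, one_mul]
  have hlim₂ : Tendsto (fun n : ℕ => ∫ p in S, (outside n).indicator g p) atTop (𝓝 0) := by
    refine integral_zero (ℝ × ℝ × ℝ) ℝ ▸ tendsto_integral_of_eventually_eq
      (fun n => hgi.aestronglyMeasurable.indicator (measurableSet_outside n)) hgi.abs
      (fun n p => ?_) fun p => (eventually_lt_natCast p).mono fun n hn => ?_
    · exact norm_indicator_le_norm_self g p
    · exact indicator_of_notMem (fun h => h.elim (fun h' => by linarith [hn.2.1])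
        (fun h' => by linarith [hn.2.2])) g
  have hI : ∫ p in S, f p ≤ 0 := nonpos_of_forall_le_add_div hlim₁ hlim₂ fun δ hδ =>
    (eventually_gt_atTop 0).mono fun n hn => h n (by exact_mod_cast hn) δ hδ
  have hae : f =ᵐ[volume.restrict S] 0 :=
    (integral_eq_zero_iff_of_nonneg hf0 hfi).mp (le_antisymm hI (integral_nonneg hf0))
  exact Measure.eqOn_open_of_ae_eq hae hS hf continuousOn_const

/-! ### The energy estimate -/

section Energy

variable {μ γ R : ℝ} {Φ Φx Φy Φz : ℝ × ℝ × ℝ → ℝ}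

/-- `|∇^{μ,γ}Φ|²` in terms of the partial derivatives `Φx, Φy, Φz` of `Φ`. -/
def energy (μ γ : ℝ) (Φx Φy Φz : ℝ × ℝ × ℝ → ℝ) (p : ℝ × ℝ × ℝ) : ℝ :=
  μ * Φx p ^ 2 + γ ^ 2 * μ * Φy p ^ 2 + Φz p ^ 2

/-- The part of `∇^{μ,γ}ψ_R · ∇^{μ,γ}Φ`, for `ψ_R = η_R(x) η_R(y) arctan Φ`, in which the
cutoff is differentiated. -/
noncomputable def cutoffFlux (μ γ R : ℝ) (Φ Φx Φy : ℝ × ℝ × ℝ → ℝ) (p : ℝ × ℝ × ℝ) : ℝ :=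
  Real.arctan (Φ p) * (μ * (deriv (cutoff R) p.1 * cutoff R p.2.1) * Φx p
    + γ ^ 2 * μ * (cutoff R p.1 * deriv (cutoff R) p.2.1) * Φy p)

lemma energy_eq_sum_sq (hμ : 0 ≤ μ) (p : ℝ × ℝ × ℝ) :
    energy μ γ Φx Φy Φz p = (√μ * Φx p) ^ 2 + (γ * √μ * Φy p) ^ 2 + Φz p ^ 2 := by
  simp only [energy, mul_pow, Real.sq_sqrt hμ]

lemma energy_nonneg (hμ : 0 ≤ μ) (p : ℝ × ℝ × ℝ) : 0 ≤ energy μ γ Φx Φy Φz p := by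
  rw [energy_eq_sum_sq hμ]
  positivity

lemma energy_div_nonneg (hμ : 0 ≤ μ) (p : ℝ × ℝ × ℝ) :
    0 ≤ energy μ γ Φx Φy Φz p / (1 + Φ p ^ 2) :=
  div_nonneg (energy_nonneg hμ p) (by positivity)

lemma energy_div_le (hμ : 0 ≤ μ) (p : ℝ × ℝ × ℝ) :
    energy μ γ Φx Φy Φz p / (1 + Φ p ^ 2) ≤ energy μ γ Φx Φy Φz p :=
  div_le_self (energy_nonneg hμ p) (le_add_of_nonneg_right (sq_nonneg _))

lemma continuousOn_energy {s : Set (ℝ × ℝ × ℝ)} (hx : ContinuousOn Φx s) (hy : ContinuousOn Φy s)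
    (hz : ContinuousOn Φz s) : ContinuousOn (energy μ γ Φx Φy Φz) s :=
  ((continuousOn_const.mul (hx.pow 2)).add (continuousOn_const.mul (hy.pow 2))).add (hz.pow 2)

lemma abs_cutoffFlux_le (hμ : 0 ≤ μ) (hR : 0 < R) {C δ : ℝ}
    (hC : ∀ x, |deriv (cutoff R) x| ≤ C / R) (hδ : 0 < δ) (p : ℝ × ℝ × ℝ) :
    |cutoffFlux μ γ R Φ Φx Φy p|
      ≤ (column (2 * R)).indicator (fun _ => δ * ((1 + γ ^ 2) * μ * (C / R) ^ 2)) p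
        + (outside R).indicator (energy μ γ Φx Φy Φz) p / δ := by
  by_cases hp : p ∈ column (2 * R) ∩ outside R
  · rw [indicator_of_mem hp.1, indicator_of_mem hp.2]
    refine abs_mul_flux_le hμ hδ (abs_arctan_le_two _) ?_ ?_ <;> rw [abs_mul]
    · exact (mul_le_of_le_one_right (abs_nonneg _) abs_cutoff_le_one).trans (hC _)
    · exact (mul_le_of_le_one_left (abs_nonneg _) abs_cutoff_le_one).trans (hC _)
  · have h₁ : deriv (cutoff R) p.1 * cutoff R p.2.1 = 0 := by
      by_contra h
      obtain ⟨hd, hc⟩ := mul_ne_zero_iff.mp h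
      exact hp ⟨mem_column.mpr ⟨(deriv_cutoff_ne_zero hR hd).2, cutoff_ne_zero hR hc⟩,
        Or.inl (deriv_cutoff_ne_zero hR hd).1⟩
    have h₂ : cutoff R p.1 * deriv (cutoff R) p.2.1 = 0 := by
      by_contra h
      obtain ⟨hc, hd⟩ := mul_ne_zero_iff.mp h
      exact hp ⟨mem_column.mpr ⟨cutoff_ne_zero hR hc, (deriv_cutoff_ne_zero hR hd).2⟩,
        Or.inr (deriv_cutoff_ne_zero hR hd).1⟩
    rw [cutoffFlux, h₁, h₂, mul_zero, zero_mul, mul_zero, zero_mul, add_zero, mul_zero, abs_zero]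
    exact add_nonneg (indicator_nonneg (fun _ _ => by positivity) _)
      (div_nonneg (indicator_nonneg (fun q _ => energy_nonneg hμ q) _) hδ.le)

lemma integrableOn_indicator_column_const (ρ c : ℝ) :
    IntegrableOn ((column ρ).indicator fun _ => c) (strip a b) := by
  rw [IntegrableOn, integrable_indicator_iff (isClosed_column _).measurableSet, IntegrableOn,
    Measure.restrict_restrict (isClosed_column _).measurableSet, inter_comm]
  exact integrableOn_const (volume_strip_inter_column_lt_top _).ne

lemma integrableOn_cutoffFlux (hμ : 0 ≤ μ) (hR : 0 < R) {C : ℝ}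
    (hC : ∀ x, |deriv (cutoff R) x| ≤ C / R)
    (hmeas : AEStronglyMeasurable (cutoffFlux μ γ R Φ Φx Φy) (volume.restrict (strip a b)))
    (hL2 : IntegrableOn (energy μ γ Φx Φy Φz) (strip a b)) :
    IntegrableOn (cutoffFlux μ γ R Φ Φx Φy) (strip a b) :=
  ((integrableOn_indicator_column_const _ _).add
    ((hL2.indicator (measurableSet_outside R)).div_const 1)).mono' hmeas
    (ae_of_all _ fun p => abs_cutoffFlux_le hμ hR hC one_pos p)

lemma setIntegral_abs_cutoffFlux_le (hab : a ≤ b) (hμ : 0 ≤ μ) (hR : 0 < R) {C δ : ℝ}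
    (hC : ∀ x, |deriv (cutoff R) x| ≤ C / R) (hδ : 0 < δ)
    (hmeas : AEStronglyMeasurable (cutoffFlux μ γ R Φ Φx Φy) (volume.restrict (strip a b)))
    (hL2 : IntegrableOn (energy μ γ Φx Φy Φz) (strip a b)) :
    ∫ p in strip a b, |cutoffFlux μ γ R Φ Φx Φy p|
      ≤ δ * (16 * (1 + γ ^ 2) * μ * C ^ 2 * (b - a))
        + (∫ p in strip a b, (outside R).indicator (energy μ γ Φx Φy Φz) p) / δ := by
  have hout := (hL2.indicator (measurableSet_outside R)).div_const δ
  calc ∫ p in strip a b, |cutoffFlux μ γ R Φ Φx Φy p|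
      ≤ ∫ p in strip a b, ((column (2 * R)).indicator
          (fun _ => δ * ((1 + γ ^ 2) * μ * (C / R) ^ 2)) p
        + (outside R).indicator (energy μ γ Φx Φy Φz) p / δ) :=
        integral_mono (integrableOn_cutoffFlux hμ hR hC hmeas hL2).abs
          ((integrableOn_indicator_column_const _ _).add hout)
          fun p => abs_cutoffFlux_le hμ hR hC hδ p
    _ = volume.real (strip a b ∩ column (2 * R)) * (δ * ((1 + γ ^ 2) * μ * (C / R) ^ 2))
        + (∫ p in strip a b, (outside R).indicator (energy μ γ Φx Φy Φz) p) / δ := by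
        rw [integral_add (integrableOn_indicator_column_const _ _) hout,
          integral_indicator_const _ (isClosed_column _).measurableSet, integral_div,
          measureReal_restrict_apply (isClosed_column _).measurableSet, inter_comm, smul_eq_mul]
    _ = δ * (16 * (1 + γ ^ 2) * μ * C ^ 2 * (b - a))
        + (∫ p in strip a b, (outside R).indicator (energy μ γ Φx Φy Φz) p) / δ := by
        rw [measureReal_strip_inter_column (by positivity) hab]
        field_simp
        ring

lemma continuousOn_energy_div {s : Set (ℝ × ℝ × ℝ)} (hΦ : ContinuousOn Φ s)
    (hx : ContinuousOn Φx s) (hy : ContinuousOn Φy s) (hz : ContinuousOn Φz s) :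
    ContinuousOn (fun p => energy μ γ Φx Φy Φz p / (1 + Φ p ^ 2)) s :=
  (continuousOn_energy hx hy hz).div (continuousOn_const.add (hΦ.pow 2)) fun _ _ => by positivity

lemma integrableOn_energy_div {s : Set (ℝ × ℝ × ℝ)} (hs : MeasurableSet s) (hμ : 0 ≤ μ)
    (hΦ : ContinuousOn Φ s) (hx : ContinuousOn Φx s) (hy : ContinuousOn Φy s)
    (hz : ContinuousOn Φz s) (hL2 : IntegrableOn (energy μ γ Φx Φy Φz) s) :
    IntegrableOn (fun p => energy μ γ Φx Φy Φz p / (1 + Φ p ^ 2)) s :=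
  hL2.mono' ((continuousOn_energy_div hΦ hx hy hz).aestronglyMeasurable hs) (ae_of_all _ fun p =>
    (abs_of_nonneg (energy_div_nonneg hμ p)).trans_le (energy_div_le hμ p))

lemma eq_zero_of_energy_eq_zero (hμ : 0 ≤ μ) {p : ℝ × ℝ × ℝ}
    (hp : energy μ γ Φx Φy Φz p = 0) :
    √μ * Φx p = 0 ∧ γ * √μ * Φy p = 0 ∧ Φz p = 0 := by
  rw [energy_eq_sum_sq hμ] at hp
  obtain ⟨hxy, hz⟩ := (add_eq_zero_iff_of_nonneg (by positivity) (sq_nonneg _)).mp hp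
  obtain ⟨hx, hy⟩ := (add_eq_zero_iff_of_nonneg (sq_nonneg _) (sq_nonneg _)).mp hxy
  exact ⟨pow_eq_zero_iff two_ne_zero |>.mp hx, pow_eq_zero_iff two_ne_zero |>.mp hy,
    pow_eq_zero_iff two_ne_zero |>.mp hz⟩

lemma continuousOn_cutoffFlux {s : Set (ℝ × ℝ × ℝ)} (hΦ : ContinuousOn Φ s)
    (hx : ContinuousOn Φx s) (hy : ContinuousOn Φy s) :
    ContinuousOn (cutoffFlux μ γ R Φ Φx Φy) s := by
  unfold cutoffFlux
  fun_prop

lemma cutoff_mul_cutoff_eq_zero (hR : 0 < R) {p : ℝ × ℝ × ℝ} (hp : p ∉ column (2 * R)) :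
    cutoff R p.1 * cutoff R p.2.1 = 0 := by
  by_contra h
  obtain ⟨h₁, h₂⟩ := mul_ne_zero_iff.mp h
  exact hp (mem_column.mpr ⟨cutoff_ne_zero hR h₁, cutoff_ne_zero hR h₂⟩)

theorem setIntegral_cutoff_energy_add_cutoffFlux_eq_zero (hab : a < b) (hR : 0 < R)
    (hΦ : ContDiffOn ℝ 1 Φ (closedStrip a b))
    (hx : ContDiffOn ℝ 1 Φx (closedStrip a b)) (hy : ContDiffOn ℝ 1 Φy (closedStrip a b))
    (hz : ContDiffOn ℝ 1 Φz (closedStrip a b))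
    (hΦx : ∀ p ∈ strip a b, Φx p = fderivWithin ℝ Φ (closedStrip a b) p (1, 0, 0))
    (hΦy : ∀ p ∈ strip a b, Φy p = fderivWithin ℝ Φ (closedStrip a b) p (0, 1, 0))
    (hΦz : ∀ p ∈ strip a b, Φz p = fderivWithin ℝ Φ (closedStrip a b) p (0, 0, 1))
    (hlap : ∀ p ∈ strip a b,
      μ * fderivWithin ℝ Φx (closedStrip a b) p (1, 0, 0)
        + γ ^ 2 * μ * fderivWithin ℝ Φy (closedStrip a b) p (0, 1, 0)
        + fderivWithin ℝ Φz (closedStrip a b) p (0, 0, 1) = 0)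
    (htop : ∀ x y, Φz (x, y, b) = 0) (hbot : ∀ x y, Φz (x, y, a) = 0) :
    ∫ p in strip a b, (cutoff R p.1 * cutoff R p.2.1 * (energy μ γ Φx Φy Φz p / (1 + Φ p ^ 2))
      + cutoffFlux μ γ R Φ Φx Φy p) = 0 := by
  have hψ : ContDiffOn ℝ 1 (fun q => cutoff R q.1 * cutoff R q.2.1 * Real.arctan (Φ q))
      (closedStrip a b) :=
    (((contDiff_cutoff R).comp contDiff_fst).mul ((contDiff_cutoff R).comp
      contDiff_snd.fst)).contDiffOn.mul (Real.contDiff_arctan.comp_contDiffOn hΦ)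
  have hsupp : Function.support (fun q => cutoff R q.1 * cutoff R q.2.1 * Real.arctan (Φ q))
      ⊆ column (2 * R) := fun p hp => by
    by_contra h
    exact hp (by simp only [cutoff_mul_cutoff_eq_zero hR h, zero_mul])
  rw [← setIntegral_grad_mul_eq_zero_of_div_eq_zero hab hψ hsupp hx hy hz hlap htop hbot]
  refine setIntegral_congr_fun isOpen_strip.measurableSet fun p hp => ?_
  have hp' := strip_subset_closedStrip hp
  simp only [fderivWithin_cutoff_mul_arctan_apply (uniqueDiffOn_closedStrip hab p hp')
    (hΦ.differentiableOn one_ne_zero p hp'), ← hΦx p hp, ← hΦy p hp, ← hΦz p hp, energy,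
    cutoffFlux]
  field_simp
  ring

theorem exists_setIntegral_cutoff_energy_le (hab : a < b) (hμ : 0 ≤ μ)
    (hΦ : ContDiffOn ℝ 1 Φ (closedStrip a b))
    (hx : ContDiffOn ℝ 1 Φx (closedStrip a b)) (hy : ContDiffOn ℝ 1 Φy (closedStrip a b))
    (hz : ContDiffOn ℝ 1 Φz (closedStrip a b))
    (hΦx : ∀ p ∈ strip a b, Φx p = fderivWithin ℝ Φ (closedStrip a b) p (1, 0, 0))
    (hΦy : ∀ p ∈ strip a b, Φy p = fderivWithin ℝ Φ (closedStrip a b) p (0, 1, 0))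
    (hΦz : ∀ p ∈ strip a b, Φz p = fderivWithin ℝ Φ (closedStrip a b) p (0, 0, 1))
    (hlap : ∀ p ∈ strip a b,
      μ * fderivWithin ℝ Φx (closedStrip a b) p (1, 0, 0)
        + γ ^ 2 * μ * fderivWithin ℝ Φy (closedStrip a b) p (0, 1, 0)
        + fderivWithin ℝ Φz (closedStrip a b) p (0, 0, 1) = 0)
    (htop : ∀ x y, Φz (x, y, b) = 0) (hbot : ∀ x y, Φz (x, y, a) = 0)
    (hL2 : IntegrableOn (energy μ γ Φx Φy Φz) (strip a b)) :
    ∃ K, ∀ R > 0, ∀ δ > 0,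
      ∫ p in strip a b, cutoff R p.1 * cutoff R p.2.1 * (energy μ γ Φx Φy Φz p / (1 + Φ p ^ 2))
        ≤ δ * K + (∫ p in strip a b, (outside R).indicator (energy μ γ Φx Φy Φz) p) / δ := by
  obtain ⟨C, hC⟩ := exists_abs_deriv_cutoff_le
  refine ⟨16 * (1 + γ ^ 2) * μ * C ^ 2 * (b - a), fun R hR δ hδ => ?_⟩
  have hcont : ∀ {f : ℝ × ℝ × ℝ → ℝ}, ContDiffOn ℝ 1 f (closedStrip a b) →
      ContinuousOn f (strip a b) := fun hf => hf.continuousOn.mono strip_subset_closedStrip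
  have hmeas : AEStronglyMeasurable (cutoffFlux μ γ R Φ Φx Φy) (volume.restrict (strip a b)) :=
    (continuousOn_cutoffFlux (hcont hΦ) (hcont hx) (hcont hy)).aestronglyMeasurable
      isOpen_strip.measurableSet
  have hA : IntegrableOn
      (fun p => cutoff R p.1 * cutoff R p.2.1 * (energy μ γ Φx Φy Φz p / (1 + Φ p ^ 2)))
      (strip a b) :=
    (integrableOn_energy_div isOpen_strip.measurableSet hμ (hcont hΦ) (hcont hx) (hcont hy)
      (hcont hz) hL2).norm.mono' (((continuous_cutoff R).comp continuous_fst).mul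
        ((continuous_cutoff R).comp continuous_snd.fst) |>.continuousOn.mul
        (continuousOn_energy_div (hcont hΦ) (hcont hx) (hcont hy) (hcont hz))
        |>.aestronglyMeasurable isOpen_strip.measurableSet)
      (ae_of_all _ fun p => abs_cutoff_mul_cutoff_mul_le _ _ _ _)
  have hid := setIntegral_cutoff_energy_add_cutoffFlux_eq_zero hab hR hΦ hx hy hz hΦx hΦy hΦz
    hlap htop hbot
  rw [integral_add hA (integrableOn_cutoffFlux hμ hR (hC R hR) hmeas hL2)] at hid
  calc _ = -∫ p in strip a b, cutoffFlux μ γ R Φ Φx Φy p := by linarith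
    _ ≤ ∫ p in strip a b, |cutoffFlux μ γ R Φ Φx Φy p| :=
      (neg_le_abs _).trans (abs_integral_le_integral_abs)
    _ ≤ _ := setIntegral_abs_cutoffFlux_le hab.le hμ hR (hC R hR) hδ hmeas hL2

end Energy

end NeumannStrip

open NeumannStrip

theorem neumann_laplace_strip_uniqueness_general
    (μ γ : ℝ) (hμ : 0 < μ)
    (Φ Φx Φy Φz : ℝ × ℝ × ℝ → ℝ)
    (S Scl : Set (ℝ × ℝ × ℝ))
    (hS : S = {p | p.2.2 ∈ Ioo (-1 : ℝ) 0})
    (hScl : Scl = {p | p.2.2 ∈ Icc (-1 : ℝ) 0})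
    (hΦ : ContDiffOn ℝ 2 Φ Scl)
    (hΦx : ∀ p, Φx p = fderivWithin ℝ Φ Scl p (1, 0, 0))
    (hΦy : ∀ p, Φy p = fderivWithin ℝ Φ Scl p (0, 1, 0))
    (hΦz : ∀ p, Φz p = fderivWithin ℝ Φ Scl p (0, 0, 1))
    (hlap : ∀ p ∈ S,
      μ * fderivWithin ℝ Φx Scl p (1, 0, 0)
        + γ ^ 2 * μ * fderivWithin ℝ Φy Scl p (0, 1, 0)
        + fderivWithin ℝ Φz Scl p (0, 0, 1) = 0)
    (htop : ∀ x y : ℝ, Φz (x, y, 0) = 0)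
    (hbot : ∀ x y : ℝ, Φz (x, y, -1) = 0)
    (hL2 : IntegrableOn
      (fun p => μ * (Φx p) ^ 2 + γ ^ 2 * μ * (Φy p) ^ 2 + (Φz p) ^ 2) S) :
    ∀ p ∈ S,
      Real.sqrt μ * Φx p = 0 ∧ γ * Real.sqrt μ * Φy p = 0 ∧ Φz p = 0 := by
  subst hS hScl
  have hab : (-1 : ℝ) < 0 := by norm_num
  have hpartial : ∀ {G : ℝ × ℝ × ℝ → ℝ} {v},
      (∀ p, G p = fderivWithin ℝ Φ (closedStrip (-1) 0) p v) →
      ContDiffOn ℝ 1 G (closedStrip (-1) 0) := fun hG =>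
    funext hG ▸ (hΦ.fderivWithin (uniqueDiffOn_closedStrip hab) le_rfl).clm_apply contDiffOn_const
  have hcont : ∀ {f : ℝ × ℝ × ℝ → ℝ}, ContDiffOn ℝ 1 f (closedStrip (-1) 0) →
      ContinuousOn f (strip (-1) 0) := fun hf => hf.continuousOn.mono strip_subset_closedStrip
  have hΦ₁ : ContDiffOn ℝ 1 Φ (closedStrip (-1) 0) := hΦ.of_le one_le_two
  obtain ⟨K, hK⟩ := exists_setIntegral_cutoff_energy_le hab hμ.le hΦ₁
    (hpartial hΦx) (hpartial hΦy) (hpartial hΦz) (fun p _ => hΦx p) (fun p _ => hΦy p)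
    (fun p _ => hΦz p) hlap htop hbot hL2
  have hvanish := eqOn_zero_of_setIntegral_cutoff_le isOpen_strip
    (continuousOn_energy_div (hcont hΦ₁) (hcont (hpartial hΦx))
      (hcont (hpartial hΦy)) (hcont (hpartial hΦz)))
    (energy_div_nonneg hμ.le)
    (integrableOn_energy_div isOpen_strip.measurableSet hμ.le (hcont hΦ₁)
      (hcont (hpartial hΦx)) (hcont (hpartial hΦy)) (hcont (hpartial hΦz)) hL2) hL2 hK
  intro p hp
  refine eq_zero_of_energy_eq_zero hμ.le ?_
  simpa [(by positivity : (1 + Φ p ^ 2) ≠ 0)] using hvanish hp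

/-- Uniqueness for the anisotropic Laplace problem on a flat strip with
homogeneous Neumann conditions at the top and bottom: the scaled gradient
of any solution with square-integrable scaled gradient vanishes. -/
theorem neumann_laplace_strip_uniqueness
    (μ γ : ℝ) (hμ : 0 < μ) (hγ : 0 < γ) (hγ1 : γ ≤ 1)
    (Φ Φx Φy Φz : ℝ × ℝ × ℝ → ℝ)
    (S Scl : Set (ℝ × ℝ × ℝ))
    (hS : S = {p | p.2.2 ∈ Ioo (-1 : ℝ) 0})
    (hScl : Scl = {p | p.2.2 ∈ Icc (-1 : ℝ) 0})
    (hΦ : ContDiffOn ℝ 2 Φ Scl)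
    (hΦx : ∀ p, Φx p = fderivWithin ℝ Φ Scl p (1, 0, 0))
    (hΦy : ∀ p, Φy p = fderivWithin ℝ Φ Scl p (0, 1, 0))
    (hΦz : ∀ p, Φz p = fderivWithin ℝ Φ Scl p (0, 0, 1))
    (hlap : ∀ p ∈ S,
      μ * fderivWithin ℝ Φx Scl p (1, 0, 0)
        + γ ^ 2 * μ * fderivWithin ℝ Φy Scl p (0, 1, 0)
        + fderivWithin ℝ Φz Scl p (0, 0, 1) = 0)
    (htop : ∀ x y : ℝ, Φz (x, y, 0) = 0)
    (hbot : ∀ x y : ℝ, Φz (x, y, -1) = 0)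
    (hL2 : IntegrableOn
      (fun p => μ * (Φx p) ^ 2 + γ ^ 2 * μ * (Φy p) ^ 2 + (Φz p) ^ 2) S) :
    ∀ p ∈ S,
      Real.sqrt μ * Φx p = 0 ∧ γ * Real.sqrt μ * Φy p = 0 ∧ Φz p = 0 :=
  neumann_laplace_strip_uniqueness_general μ γ hμ Φ Φx Φy Φz S Scl hS hScl hΦ hΦx hΦy hΦz hlap htop
    hbot hL2
end

section
/- Let μ > 0 and t > 0, and let u : ℝ → ℂ be continuously differentiable with compact support. Define ω : ℝ → ℝ by ω(ξ) = sqrt(|ξ| · tanh(√μ · |ξ|) / √μ). Then the oscillatory integral ∫_ℝ exp(i (t/ε) ω(ξ)) · u(ξ) dξ tends to 0 as ε tends to 0 from above. -/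
/-!
The phase `ω` is even, and on `(0, ∞)` it is a diffeomorphism onto its image with positive
derivative, so the singularity at `ξ = 0` can be avoided by folding the integral onto the half-line
`(0, ∞)`. There the substitution `s = ω ξ` turns `∫ exp (i λ ω ξ) w ξ dξ` into the Fourier
integral `∫ exp (i λ s) V s ds` of `V = (w / ω') ∘ ω⁻¹` (extended by zero), which tends to zero as
`λ = t / ε → ∞` by the Riemann–Lebesgue lemma.
-/

open MeasureTheory Filter Set Real Function Topology

theorem Real.hasDerivAt_tanh (x : ℝ) : HasDerivAt tanh (1 - tanh x ^ 2) x := by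
  have h := (hasDerivAt_sinh x).div (hasDerivAt_cosh x) (cosh_pos x).ne'
  rw [show sinh / cosh = tanh from funext fun y => (tanh_eq_sinh_div_cosh y).symm] at h
  refine h.congr_deriv ?_
  rw [tanh_eq_sinh_div_cosh]
  field_simp

theorem Real.continuous_tanh : Continuous tanh :=
  continuous_iff_continuousAt.2 fun x => (hasDerivAt_tanh x).continuousAt

theorem Real.tanh_pos {x : ℝ} (hx : 0 < x) : 0 < tanh x := by
  rw [tanh_eq_sinh_div_cosh]
  exact div_pos (sinh_pos_iff.2 hx) (cosh_pos x)

noncomputable def waterWavesDispersion (μ ξ : ℝ) : ℝ :=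
  √(|ξ| * tanh (√μ * |ξ|) / √μ)

theorem waterWavesDispersion_neg (μ ξ : ℝ) :
    waterWavesDispersion μ (-ξ) = waterWavesDispersion μ ξ := by
  rw [waterWavesDispersion, waterWavesDispersion, abs_neg]

theorem continuous_waterWavesDispersion (μ : ℝ) : Continuous (waterWavesDispersion μ) := by
  unfold waterWavesDispersion
  have := continuous_tanh
  fun_prop

theorem exists_pos_hasDerivAt_waterWavesDispersion {μ ξ : ℝ} (hμ : 0 < μ) (hξ : 0 < ξ) :
    ∃ d, 0 < d ∧ HasDerivAt (waterWavesDispersion μ) d ξ := by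
  set c := √μ
  have hc : 0 < c := sqrt_pos.2 hμ
  have hderiv : HasDerivAt (fun x => x * tanh (c * x) / c)
      ((tanh (c * ξ) + ξ * ((1 - tanh (c * ξ) ^ 2) * c)) / c) ξ := by
    simpa using ((hasDerivAt_id ξ).mul
      ((hasDerivAt_tanh (c * ξ)).comp ξ ((hasDerivAt_id ξ).const_mul c))).div_const c
  have htanh : 0 < tanh (c * ξ) := tanh_pos (mul_pos hc hξ)
  have hsech : 0 < 1 - tanh (c * ξ) ^ 2 := sub_pos.2 (tanh_sq_lt_one _)
  have hpos : 0 < ξ * tanh (c * ξ) / c := by positivity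
  refine ⟨_, by positivity, (hderiv.sqrt hpos.ne').congr_of_eventuallyEq ?_⟩
  filter_upwards [lt_mem_nhds hξ] with x hx
  rw [waterWavesDispersion, abs_of_pos hx]

theorem strictMonoOn_waterWavesDispersion {μ : ℝ} (hμ : 0 < μ) :
    StrictMonoOn (waterWavesDispersion μ) (Ioi 0) := by
  choose! d hd_pos hd using fun ξ (hξ : ξ ∈ Ioi (0 : ℝ)) =>
    exists_pos_hasDerivAt_waterWavesDispersion hμ hξ
  refine strictMonoOn_of_hasDerivWithinAt_pos (f' := d) (convex_Ioi 0)
    (continuous_waterWavesDispersion μ).continuousOn (fun x hx => ?_) (fun x hx => ?_)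
  · rw [interior_Ioi] at hx ⊢
    exact (hd x hx).hasDerivWithinAt
  · rw [interior_Ioi] at hx
    exact hd_pos x hx

variable {E : Type*} [NormedAddCommGroup E] [NormedSpace ℂ E]

theorem tendsto_integral_exp_mul_smul_cocompact (f : ℝ → E) :
    Tendsto (fun lam : ℝ => ∫ y, Complex.exp (Complex.I * ((lam * y : ℝ) : ℂ)) • f y)
      (cocompact ℝ) (𝓝 0) := by
  have hscale : Tendsto (fun lam : ℝ => -(2 * π)⁻¹ * lam) (cocompact ℝ) (cocompact ℝ) :=
    (Homeomorph.mulLeft₀ _ (by simp [pi_ne_zero])).isClosedEmbedding.tendsto_cocompact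
  refine ((Real.tendsto_integral_exp_smul_cocompact f).comp hscale).congr fun lam => ?_
  rw [Function.comp_apply]
  congr 1; funext y
  rw [Circle.smul_def, fourierChar_apply]
  congr 2
  push_cast
  field_simp [pi_ne_zero]

theorem tendsto_setIntegral_exp_mul_smul_cocompact_of_injOn {s : Set ℝ} (hs : MeasurableSet s)
    {φ φ' : ℝ → ℝ} (hφ : ∀ x ∈ s, HasDerivWithinAt φ (φ' x) s x) (hφ' : ∀ x ∈ s, φ' x ≠ 0)
    (hinj : InjOn φ s) (w : ℝ → E) :
    Tendsto (fun lam : ℝ => ∫ x in s, Complex.exp (Complex.I * ((lam * φ x : ℝ) : ℂ)) • w x)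
      (cocompact ℝ) (𝓝 0) := by
  set V : ℝ → E := (φ '' s).indicator fun y => |φ' (invFunOn φ s y)|⁻¹ • w (invFunOn φ s y)
    with hV_def
  refine (tendsto_integral_exp_mul_smul_cocompact V).congr fun lam => ?_
  have hV : ∀ x ∈ s, w x = |φ' x| • V (φ x) := by
    intro x hx
    rw [hV_def, indicator_of_mem (mem_image_of_mem φ hx), hinj.leftInvOn_invFunOn hx,
      smul_inv_smul₀ (abs_ne_zero.2 (hφ' x hx))]
  calc ∫ y, Complex.exp (Complex.I * ((lam * y : ℝ) : ℂ)) • V y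
      = ∫ y in φ '' s, Complex.exp (Complex.I * ((lam * y : ℝ) : ℂ)) • V y := by
        refine (setIntegral_eq_integral_of_forall_compl_eq_zero fun y hy => ?_).symm
        rw [hV_def, indicator_of_notMem hy, smul_zero]
    _ = ∫ x in s, |φ' x| • Complex.exp (Complex.I * ((lam * φ x : ℝ) : ℂ)) • V (φ x) :=
        integral_image_eq_integral_abs_deriv_smul hs hφ hinj _
    _ = ∫ x in s, Complex.exp (Complex.I * ((lam * φ x : ℝ) : ℂ)) • w x := by
        refine setIntegral_congr_fun hs fun x hx => ?_
        rw [hV x hx, smul_comm]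

theorem tendsto_setIntegral_Ioi_exp_waterWavesDispersion_smul {μ : ℝ} (hμ : 0 < μ) (w : ℝ → E) :
    Tendsto (fun lam : ℝ => ∫ ξ in Ioi 0,
        Complex.exp (Complex.I * ((lam * waterWavesDispersion μ ξ : ℝ) : ℂ)) • w ξ)
      (cocompact ℝ) (𝓝 0) := by
  choose! d hd_pos hd using fun ξ (hξ : ξ ∈ Ioi (0 : ℝ)) =>
    exists_pos_hasDerivAt_waterWavesDispersion hμ hξ
  exact tendsto_setIntegral_exp_mul_smul_cocompact_of_injOn measurableSet_Ioi
    (fun ξ hξ => (hd ξ hξ).hasDerivWithinAt) (fun ξ hξ => (hd_pos ξ hξ).ne')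
    (strictMonoOn_waterWavesDispersion hμ).injOn w

theorem tendsto_integral_exp_waterWavesDispersion_smul {μ : ℝ} (hμ : 0 < μ) {u : ℝ → E}
    (hu : Integrable u) :
    Tendsto (fun lam : ℝ => ∫ ξ,
        Complex.exp (Complex.I * ((lam * waterWavesDispersion μ ξ : ℝ) : ℂ)) • u ξ)
      (cocompact ℝ) (𝓝 0) := by
  have hsum := (tendsto_setIntegral_Ioi_exp_waterWavesDispersion_smul hμ (fun ξ => u (-ξ))).add
    (tendsto_setIntegral_Ioi_exp_waterWavesDispersion_smul hμ u)
  rw [add_zero] at hsum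
  refine hsum.congr fun lam => ?_
  set f : ℝ → E := fun ξ =>
    Complex.exp (Complex.I * ((lam * waterWavesDispersion μ ξ : ℝ) : ℂ)) • u ξ
  have hf : Integrable f := by
    have hcont := continuous_waterWavesDispersion μ
    refine hu.bdd_smul 1 (by fun_prop : Continuous _).aestronglyMeasurable
      (Eventually.of_forall fun ξ => ?_)
    rw [Complex.norm_exp_I_mul_ofReal]
  have hreflect : ∫ ξ in Ioi 0, f (-ξ) = ∫ ξ in Iic 0, f ξ := by
    rw [integral_comp_neg_Ioi, neg_zero]
  simp only [f, waterWavesDispersion_neg] at hreflect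
  rw [hreflect]
  exact intervalIntegral.integral_Iic_add_Ioi hf.integrableOn hf.integrableOn

/-- Non-stationary phase for the water-waves dispersion relation in
dimension `d = 1`: the oscillatory integral tends to `0` as `ε → 0⁺`. -/
theorem oscillatory_integral_tendsto_zero_dim1
    (μ t : ℝ) (hμ : 0 < μ) (ht : 0 < t)
    (u : ℝ → ℂ) (hu : ContDiff ℝ 1 u) (husupp : HasCompactSupport u)
    (ω : ℝ → ℝ)
    (hω : ∀ ξ : ℝ,
      ω ξ = Real.sqrt (|ξ| * Real.tanh (Real.sqrt μ * |ξ|) / Real.sqrt μ)) :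
    Tendsto
      (fun ε : ℝ => ∫ ξ : ℝ,
        Complex.exp (Complex.I * (((t / ε) * ω ξ : ℝ) : ℂ)) * u ξ)
      (nhdsWithin 0 (Set.Ioi 0)) (nhds 0) := by
  obtain rfl : ω = waterWavesDispersion μ := funext hω
  have hfreq : Tendsto (fun ε : ℝ => t / ε) (𝓝[>] 0) (cocompact ℝ) :=
    (tendsto_inv_nhdsGT_zero.const_mul_atTop ht).mono_right atTop_le_cocompact
  exact (tendsto_integral_exp_waterWavesDispersion_smul hμ
    (hu.continuous.integrable_of_hasCompactSupport husupp)).comp hfreq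
end

section
/- Let μ > 0, 0 < γ ≤ 1 and t > 0, and let u : ℝ² → ℂ be continuously differentiable with compact support. For ξ = (ξ₁, ξ₂) ∈ ℝ² set |ξ^γ| = sqrt(ξ₁² + γ²ξ₂²) and define ω(ξ) = sqrt(|ξ^γ| · tanh(√μ · |ξ^γ|) / √μ). Then the oscillatory integral ∫_{ℝ²} exp(i (t/ε) ω(ξ)) · u(ξ) dξ tends to 0 as ε tends to 0 from above. -/
/-!
In the elliptic polar coordinates `ξ = (r cos θ, r sin θ / γ)` one has `|ξ^γ| = r`, so the phase
depends on `r` alone, through `g r = √(r tanh (√μ r) / √μ)` with `g' > 0` on `(0, ∞)`. Integrating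
out `θ` leaves `∫_{r > 0} e^{i (t/ε) g r} v r dr`, and the substitution `s = g r` turns this into
the Fourier transform of a single function at a frequency proportional to `t/ε`, which tends to
`0` by the Riemann–Lebesgue lemma.
-/

open MeasureTheory Filter Set Real Topology

namespace Real

theorem hasDerivAt_tanh_s5 (x : ℝ) : HasDerivAt tanh (1 / cosh x ^ 2) x := by
  have h := (hasDerivAt_sinh x).div (hasDerivAt_cosh x) (cosh_pos x).ne'
  rw [← sq, ← sq, cosh_sq_sub_sinh_sq] at h
  rwa [show tanh = sinh / cosh from funext tanh_eq_sinh_div_cosh]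

@[fun_prop]
theorem continuous_tanh_s5 : Continuous tanh :=
  continuous_iff_continuousAt.2 fun x => (hasDerivAt_tanh_s5 x).continuousAt

theorem tanh_pos_s5 {x : ℝ} (hx : 0 < x) : 0 < tanh x := by
  rw [tanh_eq_sinh_div_cosh]
  exact div_pos (sinh_pos_iff.2 hx) (cosh_pos x)

end Real

noncomputable def radialDispersion (c r : ℝ) : ℝ := √(r * tanh (c * r) / c)

section

variable {c r : ℝ}

theorem hasDerivAt_radialDispersion (hc : 0 < c) (hr : 0 < r) :
    HasDerivAt (radialDispersion c)
      ((tanh (c * r) + r * (1 / cosh (c * r) ^ 2 * c)) / c / (2 * radialDispersion c r)) r := by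
  have htanh : HasDerivAt (fun x => tanh (c * x)) (1 / cosh (c * r) ^ 2 * c) r :=
    (hasDerivAt_tanh_s5 (c * r)).comp r
      (((hasDerivAt_id' r).const_mul c).congr_deriv (mul_one c))
  have hinner := ((hasDerivAt_id r).mul htanh).div_const c
  simp only [id, one_mul] at hinner
  exact hinner.sqrt (div_pos (mul_pos hr (tanh_pos_s5 (mul_pos hc hr))) hc).ne'

theorem deriv_radialDispersion_pos (hc : 0 < c) (hr : 0 < r) :
    0 < deriv (radialDispersion c) r := by
  have htanh := tanh_pos_s5 (mul_pos hc hr)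
  have hg : 0 < radialDispersion c r := sqrt_pos.2 (div_pos (mul_pos hr htanh) hc)
  rw [(hasDerivAt_radialDispersion hc hr).deriv]
  positivity

theorem strictMonoOn_radialDispersion (hc : 0 < c) : StrictMonoOn (radialDispersion c) (Ioi 0) :=
  strictMonoOn_of_deriv_pos (convex_Ioi 0)
    (fun _ hr => (hasDerivAt_radialDispersion hc hr).continuousAt.continuousWithinAt)
    fun _ hr => deriv_radialDispersion_pos hc (interior_subset hr)

end

theorem tendsto_integral_exp_I_mul_cocompact (W : ℝ → ℂ) :
    Tendsto (fun lam : ℝ => ∫ x, Complex.exp (Complex.I * ((lam * x : ℝ) : ℂ)) * W x)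
      (cocompact ℝ) (𝓝 0) := by
  have hc : -(2 * π)⁻¹ ≠ 0 := by simp [pi_ne_zero]
  refine ((Real.tendsto_integral_exp_smul_cocompact W).comp
    (Homeomorph.mulRight₀ _ hc).map_cocompact.le).congr fun lam => ?_
  refine integral_congr_ae (Eventually.of_forall fun x => ?_)
  simp only [Homeomorph.coe_mulRight₀, Circle.smul_def, Real.fourierChar_apply, smul_eq_mul]
  congr 2
  push_cast
  field_simp

/-- `v` is carried to `g '' s` with the density `|g'|⁻¹`; no integrability is needed, since the
change of variables and the Riemann–Lebesgue lemma hold for arbitrary integrands. -/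
theorem tendsto_setIntegral_exp_I_mul_comp_cocompact {s : Set ℝ} (hs : MeasurableSet s)
    {g g' : ℝ → ℝ} (hg : ∀ x ∈ s, HasDerivWithinAt g (g' x) s x) (hg' : ∀ x ∈ s, g' x ≠ 0)
    (hinj : InjOn g s) (v : ℝ → ℂ) :
    Tendsto (fun lam : ℝ => ∫ x in s, Complex.exp (Complex.I * ((lam * g x : ℝ) : ℂ)) * v x)
      (cocompact ℝ) (𝓝 0) := by
  set w : ℝ → ℂ := fun y => (|g' (Function.invFunOn g s y)|)⁻¹ • v (Function.invFunOn g s y)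
  have hw : ∀ x ∈ s, |g' x| • w (g x) = v x := fun x hx => by
    simp only [w, hinj.leftInvOn_invFunOn hx]
    exact smul_inv_smul₀ (abs_ne_zero.2 (hg' x hx)) _
  have himage : MeasurableSet (g '' s) :=
    hs.image_of_continuousOn_injOn (fun x hx => (hg x hx).continuousWithinAt) hinj
  refine (tendsto_integral_exp_I_mul_cocompact ((g '' s).indicator w)).congr fun lam => ?_
  have h := integral_indicator (μ := volume) himage
    (f := fun y => Complex.exp (Complex.I * ((lam * y : ℝ) : ℂ)) * w y)
  simp only [indicator_mul_right] at h
  rw [h, integral_image_eq_integral_abs_deriv_smul hs hg hinj]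
  refine setIntegral_congr_fun hs fun x hx => ?_
  rw [← hw x hx, Complex.real_smul, Complex.real_smul]
  ring

section

variable {E : Type*} [NormedAddCommGroup E]

theorem measurePreserving_prodMap_id_div {γ : ℝ} (hγ : γ ≠ 0) :
    MeasurePreserving (Prod.map id (· / γ) : ℝ × ℝ → ℝ × ℝ) volume
      (ENNReal.ofReal |γ| • volume) := by
  have h2 : MeasurePreserving (· / γ) volume (ENNReal.ofReal |γ| • volume : Measure ℝ) :=
    ⟨by fun_prop, by simpa [div_eq_mul_inv] using Real.map_volume_mul_right (inv_ne_zero hγ)⟩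
  simpa [Measure.prod_smul_right, ← Measure.volume_eq_prod] using
    (MeasurePreserving.id (volume : Measure ℝ)).prod h2

theorem measurableEmbedding_prodMap_id_div {γ : ℝ} (hγ : γ ≠ 0) :
    MeasurableEmbedding (Prod.map id (· / γ) : ℝ × ℝ → ℝ × ℝ) := by
  have h : (· / γ) = Homeomorph.mulRight₀ γ⁻¹ (inv_ne_zero hγ) :=
    funext fun x => div_eq_mul_inv x γ
  rw [h]
  exact MeasurableEmbedding.id.prodMap (Homeomorph.measurableEmbedding _)

theorem MeasureTheory.Integrable.comp_prodMap_id_div {F : ℝ × ℝ → E} (hF : Integrable F) {γ : ℝ}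
    (hγ : γ ≠ 0) : Integrable fun ξ : ℝ × ℝ => F (ξ.1, ξ.2 / γ) :=
  ((measurePreserving_prodMap_id_div hγ).integrable_comp_emb
    (measurableEmbedding_prodMap_id_div hγ)).2 (hF.smul_measure ENNReal.ofReal_ne_top)

variable [NormedSpace ℝ E]

theorem integral_comp_prodMap_id_div (F : ℝ × ℝ → E) {γ : ℝ} (hγ : γ ≠ 0) :
    ∫ ξ : ℝ × ℝ, F (ξ.1, ξ.2 / γ) = |γ| • ∫ ξ, F ξ := by
  rw [← ENNReal.toReal_ofReal (abs_nonneg γ), ← integral_smul_measure,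
    ← (measurePreserving_prodMap_id_div hγ).integral_comp (measurableEmbedding_prodMap_id_div hγ)]
  rfl

theorem integrableOn_polarCoord_target {f : ℝ × ℝ → E} (hf : Integrable f) :
    IntegrableOn (fun p : ℝ × ℝ => p.1 • f (polarCoord.symm p)) polarCoord.target := by
  have h := (integrableOn_image_iff_integrableOn_abs_det_fderiv_smul volume
    polarCoord.open_target.measurableSet
    (fun p _ => (hasFDerivAt_polarCoord_symm p).hasFDerivWithinAt) polarCoord.symm.injOn f).1
  rw [polarCoord.symm_image_target_eq_source] at h
  refine (h hf.integrableOn).congr_fun (fun p hp => ?_) polarCoord.open_target.measurableSet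
  dsimp only
  rw [det_fderivPolarCoordSymm, abs_of_pos hp.1]

theorem integral_eq_abs_inv_smul_integral_ellipticPolar {F : ℝ × ℝ → E} (hF : Integrable F)
    {γ : ℝ} (hγ : γ ≠ 0) :
    ∫ ξ, F ξ = |γ|⁻¹ • ∫ r in Ioi 0, ∫ θ in Ioo (-π) π, r • F (r * cos θ, r * sin θ / γ) := by
  have hG := integrableOn_polarCoord_target (hF.comp_prodMap_id_div hγ)
  rw [IntegrableOn, Measure.volume_eq_prod] at hG
  rw [eq_inv_smul_iff₀ (abs_ne_zero.2 hγ), ← integral_comp_prodMap_id_div F hγ,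
    ← integral_comp_polarCoord_symm]
  exact setIntegral_prod _ hG

end

theorem oscillatory_integral_tendsto_zero_dim2_general
    (μ γ t : ℝ) (hμ : 0 < μ) (hγ : 0 < γ) (ht : 0 < t)
    (u : ℝ × ℝ → ℂ) (hu : ContDiff ℝ 1 u) (husupp : HasCompactSupport u)
    (nγ ω : ℝ × ℝ → ℝ)
    (hnγ : ∀ ξ : ℝ × ℝ, nγ ξ = Real.sqrt (ξ.1 ^ 2 + γ ^ 2 * ξ.2 ^ 2))
    (hω : ∀ ξ : ℝ × ℝ,
      ω ξ = Real.sqrt (nγ ξ * Real.tanh (Real.sqrt μ * nγ ξ) / Real.sqrt μ)) :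
    Tendsto
      (fun ε : ℝ => ∫ ξ : ℝ × ℝ,
        Complex.exp (Complex.I * (((t / ε) * ω ξ : ℝ) : ℂ)) * u ξ)
      (nhdsWithin 0 (Set.Ioi 0)) (nhds 0) := by
  have hc : 0 < √μ := sqrt_pos.2 hμ
  have hω_ellipse : ∀ r > 0, ∀ θ, ω (r * cos θ, r * sin θ / γ) = radialDispersion √μ r := by
    intro r hr θ
    have hnγr : nγ (r * cos θ, r * sin θ / γ) = r := by
      have hsq : (r * cos θ) ^ 2 + γ ^ 2 * (r * sin θ / γ) ^ 2 = r ^ 2 := by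
        rw [div_pow, mul_div_cancel₀ _ (pow_ne_zero 2 hγ.ne')]
        linear_combination r ^ 2 * sin_sq_add_cos_sq θ
      rw [hnγ, hsq, sqrt_sq hr.le]
    rw [hω, hnγr, radialDispersion]
  have hω_cont : Continuous ω := by
    rw [funext hω, funext hnγ]
    fun_prop
  have hpolar : ∀ lam : ℝ, ∫ ξ, Complex.exp (Complex.I * ((lam * ω ξ : ℝ) : ℂ)) * u ξ =
      |γ|⁻¹ • ∫ r in Ioi 0, Complex.exp (Complex.I * ((lam * radialDispersion √μ r : ℝ) : ℂ)) *
        ∫ θ in Ioo (-π) π, r • u (r * cos θ, r * sin θ / γ) := by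
    intro lam
    have hint : Integrable fun ξ => Complex.exp (Complex.I * ((lam * ω ξ : ℝ) : ℂ)) * u ξ :=
      ((by fun_prop : Continuous _).mul hu.continuous).integrable_of_hasCompactSupport
        husupp.mul_left
    rw [integral_eq_abs_inv_smul_integral_ellipticPolar hint hγ.ne']
    congr 1
    refine setIntegral_congr_fun measurableSet_Ioi fun r hr => ?_
    simp_rw [hω_ellipse r hr, ← mul_smul_comm]
    exact integral_const_mul _ _
  have hRL := tendsto_setIntegral_exp_I_mul_comp_cocompact measurableSet_Ioi
    (fun r hr => (hasDerivAt_radialDispersion hc hr).differentiableAt.hasDerivAt.hasDerivWithinAt)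
    (fun r hr => (deriv_radialDispersion_pos hc hr).ne') (strictMonoOn_radialDispersion hc).injOn
    fun r => ∫ θ in Ioo (-π) π, r • u (r * cos θ, r * sin θ / γ)
  have hfreq : Tendsto (fun ε => t / ε) (𝓝[>] 0) atTop :=
    tendsto_inv_nhdsGT_zero.const_mul_atTop ht
  have h := ((hRL.mono_left atTop_le_cocompact).const_smul |γ|⁻¹).comp hfreq
  rw [smul_zero] at h
  exact h.congr fun ε => (hpolar (t / ε)).symm

/-- Non-stationary phase for the water-waves dispersion relation in
dimension `d = 2`: the oscillatory integral tends to `0` as `ε → 0⁺`. -/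
theorem oscillatory_integral_tendsto_zero_dim2
    (μ γ t : ℝ) (hμ : 0 < μ) (hγ : 0 < γ) (hγ1 : γ ≤ 1) (ht : 0 < t)
    (u : ℝ × ℝ → ℂ) (hu : ContDiff ℝ 1 u) (husupp : HasCompactSupport u)
    (nγ ω : ℝ × ℝ → ℝ)
    (hnγ : ∀ ξ : ℝ × ℝ, nγ ξ = Real.sqrt (ξ.1 ^ 2 + γ ^ 2 * ξ.2 ^ 2))
    (hω : ∀ ξ : ℝ × ℝ,
      ω ξ = Real.sqrt (nγ ξ * Real.tanh (Real.sqrt μ * nγ ξ) / Real.sqrt μ)) :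
    Tendsto
      (fun ε : ℝ => ∫ ξ : ℝ × ℝ,
        Complex.exp (Complex.I * (((t / ε) * ω ξ : ℝ) : ℂ)) * u ξ)
      (nhdsWithin 0 (Set.Ioi 0)) (nhds 0) :=
  oscillatory_integral_tendsto_zero_dim2_general μ γ t hμ hγ ht u hu husupp nγ ω hnγ hω
end
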